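/- arXiv:2603.13915 — 5 statements merged into one kernel-verified Lean document; each statement's English description precedes it below -/
import Mathlib

section
/- In ℚ⟦X⟧ one has the identity Σ_{n=0}^∞ a^o_od(n)·X^n = ( (−X; X²)_∞ / (X²; X²)_∞ ) · Σ_{n=0}^∞ X^{2n²+n} / (−X; X²)_{n+1}, where (−X;X²)_∞ = ∏_{k=0}^∞ (1+X^{2k+1}) and (X²;X²)_∞ = ∏_{k=0}^∞ (1−X^{2k+2}). -/
open PowerSeries Finset
open scoped Classical

noncomputable section

instance : TopologicalSpace (PowerSeries ℚ) :=
  @Pi.topologicalSpace (Unit →₀ ℕ) (fun _ => ℚ) (fun _ => inferInstance)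

instance : T2Space (PowerSeries ℚ) := by
  exact inferInstanceAs (T2Space ((Unit →₀ ℕ) → ℚ))


/-- `(ε X^b ; X^d)_∞ = ∏_{k=0}^∞ (1 - ε X^{b+dk})`, a coefficientwise-convergent
infinite product in `ℚ⟦X⟧` with the product topology. -/
def pochInf (ε : ℚ) (b d : ℕ) : PowerSeries ℚ :=
  ∏' k : ℕ, (1 - PowerSeries.C ε * PowerSeries.X ^ (b + d * k))

/-- `(ε X^b ; X^d)_m = ∏_{k=0}^{m-1} (1 - ε X^{b+dk})` -/
def pochFin (ε : ℚ) (b d m : ℕ) : PowerSeries ℚ :=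
  ∏ k ∈ Finset.range m, (1 - PowerSeries.C ε * PowerSeries.X ^ (b + d * k))

/-- the smallest positive integer that is not a part of `l` -/
def pmex {n : ℕ} (l : n.Partition) : ℕ := sInf {k : ℕ | 0 < k ∧ k ∉ l.parts}

/-- the smallest odd positive integer that is not a part of `l` -/
def pmoex {n : ℕ} (l : n.Partition) : ℕ := sInf {k : ℕ | Odd k ∧ k ∉ l.parts}

/-- the smallest even positive integer that is not a part of `l` -/
def pmeex {n : ℕ} (l : n.Partition) : ℕ := sInf {k : ℕ | Even k ∧ 0 < k ∧ k ∉ l.parts}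

/-- every odd part occurs at most once -/
def OddDistinct {n : ℕ} (l : n.Partition) : Prop := ∀ i, Odd i → l.parts.count i ≤ 1

/-- every even part occurs at most once -/
def EvenDistinct {n : ℕ} (l : n.Partition) : Prop := ∀ i, Even i → l.parts.count i ≤ 1

/-- `a^o_od(n)`: number of partitions of `n` with distinct odd parts and odd mex -/
def aood (n : ℕ) : ℕ :=
  (Finset.univ.filter fun l : n.Partition => OddDistinct l ∧ Odd (pmex l)).card

namespace Aux

lemma apply_eq_coeff (f : PowerSeries ℚ) (j : Unit →₀ ℕ) : f j = coeff (j ()) f := by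
  have : j = Finsupp.single () (j ()) := by ext; simp
  conv_lhs => rw [this]
  rfl

/-- `f` agrees with `1` in all coefficients up to `d`. -/
def IsOneUpTo (d : ℕ) (f : PowerSeries ℚ) : Prop :=
  ∀ e ≤ d, coeff e f = coeff e 1

lemma coeff_mul_congr_right {B B' : PowerSeries ℚ} (n : ℕ) (A : PowerSeries ℚ)
    (h : ∀ e ≤ n, coeff e B = coeff e B') :
    coeff n (A * B) = coeff n (A * B') := by
  rw [coeff_mul, coeff_mul]
  refine Finset.sum_congr rfl fun p hp => ?_
  rw [h p.2 (by rw [HasAntidiagonal.mem_antidiagonal] at hp; omega)]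

lemma coeff_mul_of_isOne {A B : PowerSeries ℚ} {n : ℕ} (hB : IsOneUpTo n B) :
    coeff n (A * B) = coeff n A := by
  rw [coeff_mul_congr_right n A hB, mul_one]

lemma IsOneUpTo.mul {A B : PowerSeries ℚ} {n : ℕ} (hA : IsOneUpTo n A) (hB : IsOneUpTo n B) :
    IsOneUpTo n (A * B) := by
  intro e he
  rw [coeff_mul_of_isOne (fun i hi => hB i (hi.trans he)), hA e he]

lemma isOneUpTo_prod {n : ℕ} {t : Finset ℕ} {f : ℕ → PowerSeries ℚ}
    (h : ∀ k ∈ t, IsOneUpTo n (f k)) : IsOneUpTo n (∏ k ∈ t, f k) := by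
  induction t using Finset.cons_induction with
  | empty => intro e he; simp
  | cons a s ha ih =>
    rw [Finset.prod_cons]
    exact (h a (mem_cons_self a s)).mul (ih fun k hk => h k (mem_cons_of_mem hk))

lemma coeff_prod_subset {n : ℕ} {s t : Finset ℕ} (hst : s ⊆ t) {f : ℕ → PowerSeries ℚ}
    (h : ∀ k ∈ t \ s, IsOneUpTo n (f k)) :
    coeff n (∏ k ∈ t, f k) = coeff n (∏ k ∈ s, f k) := by
  rw [← Finset.prod_sdiff hst, mul_comm]
  exact coeff_mul_of_isOne (isOneUpTo_prod h)

lemma isOneUpTo_inv {A : PowerSeries ℚ} {n : ℕ} (hA : IsOneUpTo n A)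
    (h0 : constantCoeff A = 1) : IsOneUpTo n A⁻¹ := by
  intro e he
  have hmul : A * A⁻¹ = 1 := PowerSeries.mul_inv_cancel A (by rw [h0]; exact one_ne_zero)
  have h1 : coeff e (A * A⁻¹) = coeff e A⁻¹ := by
    rw [coeff_mul, Finset.sum_eq_single (0, e)]
    · have : coeff 0 A = 1 := by
        rw [hA 0 (Nat.zero_le n), coeff_one]; simp
      rw [this, one_mul]
    · rintro ⟨i, j⟩ hij hne
      rw [HasAntidiagonal.mem_antidiagonal] at hij
      have hi : i ≠ 0 := by rintro rfl; exact hne (by simp [← hij])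
      have : coeff i A = 0 := by
        rw [hA i (by omega), coeff_one, if_neg hi]
      rw [this, zero_mul]
    · intro h; exact absurd (HasAntidiagonal.mem_antidiagonal.mpr (by simp)) h
  rw [← h1, hmul]

/-- Coefficientwise criterion for `HasSum` in the product topology. -/
lemma hasSum_of_coeff (g : ℕ → PowerSeries ℚ)
    (h : ∀ d n : ℕ, d < n → coeff d (g n) = 0) :
    HasSum g (PowerSeries.mk fun d => ∑ n ∈ range (d + 1), coeff d (g n)) := by
  rw [HasSum]
  apply tendsto_pi_nhds.mpr
  intro j
  set d := j () with hd
  apply Filter.Tendsto.congr' _ (tendsto_const_nhds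
    (x := (PowerSeries.mk fun d => ∑ n ∈ range (d + 1), coeff d (g n)) j))
  rw [Filter.eventuallyEq_iff_exists_mem]
  refine ⟨{s | range (d + 1) ⊆ s}, Filter.mem_atTop _, fun s hs => ?_⟩
  simp only [Set.mem_setOf_eq] at hs
  show (PowerSeries.mk fun d => ∑ n ∈ range (d + 1), coeff d (g n)) j = (∑ b ∈ s, g b) j
  rw [apply_eq_coeff (PowerSeries.mk fun d => ∑ n ∈ range (d + 1), coeff d (g n)) j,
    apply_eq_coeff (∑ b ∈ s, g b) j, ← hd, coeff_mk, map_sum]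
  exact Finset.sum_subset hs fun n _ hn => h d n (by simpa using hn)

/-- Coefficientwise criterion for `HasProd` in the product topology. -/
lemma hasProd_of_coeff (f : ℕ → PowerSeries ℚ)
    (h : ∀ k : ℕ, IsOneUpTo k (f k)) :
    HasProd f (PowerSeries.mk fun d => coeff d (∏ k ∈ range (d + 1), f k)) := by
  rw [HasProd]
  apply tendsto_pi_nhds.mpr
  intro j
  set d := j () with hd
  apply Filter.Tendsto.congr' _ (tendsto_const_nhds
    (x := (PowerSeries.mk fun d => coeff d (∏ k ∈ range (d + 1), f k)) j))
  rw [Filter.eventuallyEq_iff_exists_mem]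
  refine ⟨{s | range (d + 1) ⊆ s}, Filter.mem_atTop _, fun s hs => ?_⟩
  simp only [Set.mem_setOf_eq] at hs
  show (PowerSeries.mk fun d => coeff d (∏ k ∈ range (d + 1), f k)) j = (∏ b ∈ s, f b) j
  rw [apply_eq_coeff (PowerSeries.mk fun d => coeff d (∏ k ∈ range (d + 1), f k)) j,
    apply_eq_coeff (∏ b ∈ s, f b) j, ← hd, coeff_mk]
  exact (coeff_prod_subset hs fun k hk => by
    have hkd : d < k := by simp only [mem_sdiff, mem_range] at hk; omega
    exact fun e he => h k e (by omega)).symm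


lemma isOneUpTo_factor (ε : ℚ) {a n : ℕ} (h : n < a) :
    IsOneUpTo n (1 - PowerSeries.C ε * PowerSeries.X ^ a) := fun e he => by
  simp [coeff_C_mul, coeff_X_pow, show e ≠ a by omega]

lemma coeff_pochFin_stable (ε : ℚ) {b d : ℕ} (hb : 1 ≤ b) (hd : 1 ≤ d) {n M N : ℕ}
    (hM : n < M) (hMN : M ≤ N) :
    coeff n (pochFin ε b d N) = coeff n (pochFin ε b d M) := by
  apply coeff_prod_subset (Finset.range_subset_range.mpr hMN)
  intro k hk
  simp only [mem_sdiff, mem_range] at hk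
  exact isOneUpTo_factor ε (by nlinarith [hk.1, hk.2])

lemma pochInf_hasProd (ε : ℚ) {b d : ℕ} (hb : 1 ≤ b) (hd : 1 ≤ d) :
    HasProd (fun k => 1 - PowerSeries.C ε * PowerSeries.X ^ (b + d * k))
      (PowerSeries.mk fun n => coeff n (pochFin ε b d (n + 1))) :=
  hasProd_of_coeff _ fun k => isOneUpTo_factor ε (by nlinarith)

lemma coeff_pochInf (ε : ℚ) {b d : ℕ} (hb : 1 ≤ b) (hd : 1 ≤ d) {n N : ℕ} (hN : n < N) :
    coeff n (pochInf ε b d) = coeff n (pochFin ε b d N) := by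
  rw [pochInf, (pochInf_hasProd ε hb hd).tprod_eq, coeff_mk]
  exact (coeff_pochFin_stable ε hb hd (Nat.lt_succ_self n) (by omega)).symm

lemma isOneUpTo_pochFin (ε : ℚ) {b d n m : ℕ} (hb : n < b) : IsOneUpTo n (pochFin ε b d m) :=
  isOneUpTo_prod fun k _ => isOneUpTo_factor ε (by omega)

lemma isOneUpTo_pochInf (ε : ℚ) {b d n : ℕ} (hb : n < b) (hd : 1 ≤ d) :
    IsOneUpTo n (pochInf ε b d) := by
  intro e he
  rw [coeff_pochInf ε (by omega) hd (Nat.lt_succ_self e)]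
  exact isOneUpTo_pochFin ε (by omega) e le_rfl

lemma constantCoeff_pochFin (ε : ℚ) {b d : ℕ} (hb : 1 ≤ b) (m : ℕ) :
    constantCoeff (pochFin ε b d m) = 1 := by
  have := isOneUpTo_pochFin ε (b := b) (d := d) (m := m) (n := 0) hb 0 le_rfl
  rw [coeff_zero_eq_constantCoeff] at this
  simpa using this

lemma constantCoeff_pochInf (ε : ℚ) {b d : ℕ} (hb : 1 ≤ b) (hd : 1 ≤ d) :
    constantCoeff (pochInf ε b d) = 1 := by
  have h0 := coeff_pochInf ε hb hd (n := 0) (N := 1) one_pos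
  rw [coeff_zero_eq_constantCoeff] at h0
  rw [h0]
  exact constantCoeff_pochFin ε hb 1

lemma pochFin_add (ε : ℚ) (b d m N : ℕ) :
    pochFin ε b d (m + N) = pochFin ε b d m * pochFin ε (b + d * m) d N := by
  rw [pochFin, pochFin, pochFin, Finset.prod_range_add]
  congr 1
  exact Finset.prod_congr rfl fun k _ => by ring_nf

lemma pochInf_split (ε : ℚ) {b d : ℕ} (hb : 1 ≤ b) (hd : 1 ≤ d) (m : ℕ) :
    pochInf ε b d = pochFin ε b d m * pochInf ε (b + d * m) d := by
  ext n
  rw [coeff_pochInf ε hb hd (show n < m + (n + 1) by omega), pochFin_add,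
    coeff_mul_congr_right n (pochFin ε b d m)
      (B := pochInf ε (b + d * m) d) (B' := pochFin ε (b + d * m) d (n + 1))]
  intro e he
  exact coeff_pochInf ε (by omega) hd (by omega)

variable {α : Type*}

/-- A convenience constructor for the power series whose coefficients indicate a subset. -/
def indicatorSeries (α : Type*) [Semiring α] (s : Set ℕ) : PowerSeries α :=
  PowerSeries.mk fun n => if n ∈ s then 1 else 0

theorem coeff_indicator (s : Set ℕ) [Semiring α] (n : ℕ) :
    coeff n (indicatorSeries α s) = if n ∈ s then 1 else 0 :=
  coeff_mk _ _

theorem coeff_indicator_pos (s : Set ℕ) [Semiring α] (n : ℕ) (h : n ∈ s) :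
    coeff n (indicatorSeries α s) = 1 := by rw [coeff_indicator, if_pos h]

theorem coeff_indicator_neg (s : Set ℕ) [Semiring α] (n : ℕ) (h : n ∉ s) :
    coeff n (indicatorSeries α s) = 0 := by rw [coeff_indicator, if_neg h]

theorem constantCoeff_indicator (s : Set ℕ) [Semiring α] :
    constantCoeff (indicatorSeries α s) = if 0 ∈ s then 1 else 0 :=
  rfl

theorem two_series (i : ℕ) [Semiring α] :
    1 + (X : PowerSeries α) ^ i.succ = indicatorSeries α {0, i.succ} := by
  ext n
  simp only [coeff_indicator, coeff_one, coeff_X_pow, Set.mem_insert_iff, Set.mem_singleton_iff,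
    map_add]
  cases' n with d
  · simp [(Nat.succ_ne_zero i).symm]
  · simp [Nat.succ_ne_zero d]

theorem num_series' [Field α] (i : ℕ) :
    (1 - (X : PowerSeries α) ^ (i + 1))⁻¹ = indicatorSeries α {k | i + 1 ∣ k} := by
  rw [PowerSeries.inv_eq_iff_mul_eq_one]
  · ext n
    cases n with
    | zero => simp [mul_sub, zero_pow, constantCoeff_indicator]
    | succ n =>
      simp only [coeff_one, if_false, mul_sub, mul_one, coeff_indicator,
        LinearMap.map_sub, reduceCtorEq]
      simp_rw [coeff_mul, coeff_X_pow, coeff_indicator, @boole_mul _ _ _ _]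
      erw [@sum_ite _ _ _ _ _ (fun _ => Classical.propDecidable _), sum_ite]
      simp_rw [@filter_filter _ _ _ _ _, sum_const_zero, add_zero, sum_const, nsmul_eq_mul, mul_one,
        sub_eq_iff_eq_add, zero_add]
      symm
      split_ifs with h
      · suffices #{a ∈ antidiagonal (n + 1) | i + 1 ∣ a.fst ∧ a.snd = i + 1} = 1 by
          simp only [Set.mem_setOf_eq]; convert congr_arg ((↑) : ℕ → α) this; norm_cast
        rw [card_eq_one]
        cases' h with p hp
        refine ⟨((i + 1) * (p - 1), i + 1), ?_⟩
        ext ⟨a₁, a₂⟩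
        simp only [mem_filter, Prod.mk_inj, HasAntidiagonal.mem_antidiagonal, mem_singleton]
        constructor
        · rintro ⟨a_left, ⟨a, rfl⟩, rfl⟩
          refine ⟨?_, rfl⟩
          rw [Nat.mul_sub_left_distrib, ← hp, ← a_left, mul_one, Nat.add_sub_cancel]
        · rintro ⟨rfl, rfl⟩
          match p with
          | 0 => rw [mul_zero] at hp; cases hp
          | p + 1 => rw [hp]; simp [mul_add]
      · suffices #{a ∈ antidiagonal (n + 1) | i + 1 ∣ a.fst ∧ a.snd = i + 1} = 0 by
          simp only [Set.mem_setOf_eq]; convert congr_arg ((↑) : ℕ → α) this; norm_cast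
        rw [card_eq_zero]
        apply eq_empty_of_forall_notMem
        simp only [Prod.forall, mem_filter, not_and, HasAntidiagonal.mem_antidiagonal]
        rintro _ h₁ h₂ ⟨a, rfl⟩ rfl
        apply h
        simp [← h₂]
  · simp [zero_pow]

def mkOdd : ℕ ↪ ℕ :=
  ⟨fun i => 2 * i + 1, fun x y h => by linarith⟩

-- The main workhorse of the partition theorem proof.
theorem partialGF_prop (α : Type*) [CommSemiring α] (n : ℕ) (s : Finset ℕ) (hs : ∀ i ∈ s, 0 < i)
    (c : ℕ → Set ℕ) (hc : ∀ i, i ∉ s → 0 ∈ c i) :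
    #{p : n.Partition | (∀ j, p.parts.count j ∈ c j) ∧ ∀ j ∈ p.parts, j ∈ s} =
      coeff n (∏ i ∈ s, indicatorSeries α ((· * i) '' c i)) := by
  simp_rw [coeff_prod, coeff_indicator, prod_boole, sum_boole]
  apply congr_arg
  simp only [mem_univ, forall_true_left, not_and, not_forall, exists_prop,
    Set.mem_image, not_exists]
  set φ : (a : Nat.Partition n) →
    a ∈ filter (fun p ↦ (∀ (j : ℕ), Multiset.count j p.parts ∈ c j) ∧ ∀ j ∈ p.parts, j ∈ s) univ →
    ℕ →₀ ℕ := fun p _ => {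
      toFun := fun i => Multiset.count i p.parts • i
      support := Finset.filter (fun i => i ≠ 0) p.parts.toFinset
      mem_support_toFun := fun a => by
        simp only [smul_eq_mul, ne_eq, mul_eq_zero, Multiset.count_eq_zero]
        rw [not_or, not_not]
        simp only [Multiset.mem_toFinset, not_not, mem_filter] }
  refine Finset.card_bij φ ?_ ?_ ?_
  · intro a ha
    simp only [φ, not_forall, not_exists, not_and, exists_prop, mem_filter]
    rw [mem_finsuppAntidiag]
    dsimp only [ne_eq, smul_eq_mul, id_eq, eq_mpr_eq_cast, le_eq_subset, Finsupp.coe_mk]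
    simp only [mem_univ, forall_true_left, not_and, not_forall, exists_prop,
      mem_filter, true_and] at ha
    refine ⟨⟨?_, fun i ↦ ?_⟩, fun i _ ↦ ⟨a.parts.count i, ha.1 i, rfl⟩⟩
    · conv_rhs => simp [← a.parts_sum]
      rw [sum_multiset_count_of_subset _ s]
      · simp only [smul_eq_mul]
      · intro i
        simp only [Multiset.mem_toFinset, not_not, mem_filter]
        apply ha.2
    · simp only [ne_eq, Multiset.mem_toFinset, not_not, mem_filter, and_imp]
      exact fun hi _ ↦ ha.2 i hi
  · intro p₁ hp₁ p₂ hp₂ h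
    apply Nat.Partition.ext
    simp only [true_and, mem_univ, mem_filter] at hp₁ hp₂
    ext i
    simp only [φ, ne_eq, Multiset.mem_toFinset, not_not, smul_eq_mul, Finsupp.mk.injEq] at h
    by_cases hi : i = 0
    · rw [hi]
      rw [Multiset.count_eq_zero_of_notMem]
      · rw [Multiset.count_eq_zero_of_notMem]
        intro a; exact Nat.lt_irrefl 0 (hs 0 (hp₂.2 0 a))
      intro a; exact Nat.lt_irrefl 0 (hs 0 (hp₁.2 0 a))
    · rw [← mul_left_inj' hi]
      rw [funext_iff] at h
      exact h.2 i
  · simp only [φ, mem_filter, mem_finsuppAntidiag, mem_univ, exists_prop, true_and, and_assoc]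
    rintro f ⟨hf, hf₃, hf₄⟩
    have hf' : f ∈ finsuppAntidiag s n := mem_finsuppAntidiag.mpr ⟨hf, hf₃⟩
    simp only [mem_finsuppAntidiag] at hf'
    refine ⟨⟨∑ i ∈ s, Multiset.replicate (f i / i) i, ?_, ?_⟩, ?_, ?_, ?_⟩
    · intro i hi
      simp only [exists_prop, Multiset.mem_sum, mem_map, Function.Embedding.coeFn_mk] at hi
      rcases hi with ⟨t, ht, z⟩
      apply hs
      rwa [Multiset.eq_of_mem_replicate z]
    · simp_rw [Multiset.sum_sum, Multiset.sum_replicate, Nat.nsmul_eq_mul]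
      rw [← hf'.1]
      refine sum_congr rfl fun i hi => Nat.div_mul_cancel ?_
      rcases hf₄ i hi with ⟨w, _, hw₂⟩
      rw [← hw₂]
      exact dvd_mul_left _ _
    · intro i
      simp_rw [Multiset.count_sum', Multiset.count_replicate, sum_ite_eq']
      split_ifs with h
      · rcases hf₄ i h with ⟨w, hw₁, hw₂⟩
        rwa [← hw₂, Nat.mul_div_cancel _ (hs i h)]
      · exact hc _ h
    · intro i hi
      rw [Multiset.mem_sum] at hi
      rcases hi with ⟨j, hj₁, hj₂⟩
      rwa [Multiset.eq_of_mem_replicate hj₂]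
    · ext i
      simp_rw [Multiset.count_sum', Multiset.count_replicate, sum_ite_eq']
      simp only [ne_eq, Multiset.mem_toFinset, not_not, smul_eq_mul, ite_mul,
        zero_mul, Finsupp.coe_mk]
      split_ifs with h
      · apply Nat.div_mul_cancel
        rcases hf₄ i h with ⟨w, _, hw₂⟩
        apply Dvd.intro_left _ hw₂
      · apply symm
        rw [← Finsupp.notMem_support_iff]
        exact notMem_mono hf'.2 h


/-- partitions with distinct odd parts, all odd parts at least `2m+3` -/
def cset (m t : ℕ) : Finset t.Partition :=
  Finset.univ.filter fun p => OddDistinct p ∧ ∀ j ∈ p.parts, Odd j → 2 * m + 3 ≤ j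

lemma prod_inv (t : Finset ℕ) (f : ℕ → PowerSeries ℚ) :
    (∏ k ∈ t, f k)⁻¹ = ∏ k ∈ t, (f k)⁻¹ := by
  induction t using Finset.cons_induction with
  | empty =>
    simp only [Finset.prod_empty]
    rw [PowerSeries.inv_eq_iff_mul_eq_one (by simp), one_mul]
  | cons a s ha ih => rw [Finset.prod_cons, Finset.prod_cons, PowerSeries.mul_inv_rev, ih, mul_comm]

def embO (m : ℕ) : ℕ ↪ ℕ := ⟨fun k => 2 * m + 3 + 2 * k, fun x y h => by dsimp only at h; omega⟩

def embE : ℕ ↪ ℕ := ⟨fun k => 2 + 2 * k, fun x y h => by dsimp only at h; omega⟩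

lemma embO_apply (m k : ℕ) : embO m k = 2 * m + 3 + 2 * k := rfl

lemma embE_apply (k : ℕ) : embE k = 2 + 2 * k := rfl

lemma coeff_twoFin (m t N : ℕ) (hN : t < N) :
    coeff t (pochFin (-1) (2 * m + 3) 2 N * (pochFin 1 2 2 N)⁻¹) = #(cset m t) := by
  classical
  set s : Finset ℕ := ((range N).map (embO m)) ∪ ((range N).map embE) with hs_def
  have hdisj : Disjoint ((range N).map (embO m)) ((range N).map embE) := by
    rw [Finset.disjoint_left]
    rintro a ha hb
    simp only [mem_map, mem_range, embO_apply, embE_apply] at ha hb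
    obtain ⟨x, -, hx⟩ := ha
    obtain ⟨y, -, hy⟩ := hb
    omega
  set c : ℕ → Set ℕ := fun i => if Odd i then ({0, 1} : Set ℕ) else Set.univ with hc_def
  have hmain := partialGF_prop ℚ t s (by
      intro i hi
      simp only [hs_def, mem_union, mem_map, mem_range, embO_apply, embE_apply] at hi
      rcases hi with ⟨x, -, hx⟩ | ⟨x, -, hx⟩ <;> omega)
    c (by
      intro i _
      by_cases h : Odd i <;> simp [hc_def, h])
  have hO : ∀ k : ℕ, indicatorSeries ℚ ((· * embO m k) '' c (embO m k)) =
      1 - PowerSeries.C (-1) * PowerSeries.X ^ (2 * m + 3 + 2 * k) := by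
    intro k
    have hodd : Odd (embO m k) := by rw [embO_apply]; exact ⟨m + 1 + k, by ring⟩
    have him : (· * embO m k) '' c (embO m k) = {0, Nat.succ (2 * m + 2 + 2 * k)} := by
      rw [hc_def]
      simp only [hodd, if_pos, Set.image_pair]
      ext j
      simp only [Set.mem_insert_iff, Set.mem_singleton_iff, embO_apply, zero_mul, one_mul,
        Nat.succ_eq_add_one]
      omega
    rw [him, ← two_series, map_neg, map_one,
      show Nat.succ (2 * m + 2 + 2 * k) = 2 * m + 3 + 2 * k from by omega]
    ring
  have hE : ∀ k : ℕ, indicatorSeries ℚ ((· * embE k) '' c (embE k)) =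
      (1 - PowerSeries.C 1 * PowerSeries.X ^ (2 + 2 * k))⁻¹ := by
    intro k
    have heven : ¬ Odd (embE k) := by rw [embE_apply, Nat.odd_iff]; omega
    have him : (· * embE k) '' c (embE k) = {j | 2 * k + 1 + 1 ∣ j} := by
      rw [hc_def]
      simp only [heven, if_neg, not_false_iff, Set.image_univ]
      ext j
      simp only [Set.mem_range, Set.mem_setOf_eq, embE_apply]
      constructor
      · rintro ⟨p, rfl⟩
        exact ⟨p, by ring⟩
      · rintro ⟨p, rfl⟩
        exact ⟨p, by ring⟩
    rw [him, ← num_series', map_one, one_mul, show (2:ℕ) + 2 * k = 2 * k + 1 + 1 from by omega]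
  have hprod : (∏ i ∈ s, indicatorSeries ℚ ((· * i) '' c i)) =
      pochFin (-1) (2 * m + 3) 2 N * (pochFin 1 2 2 N)⁻¹ := by
    rw [hs_def, Finset.prod_union hdisj, Finset.prod_map, Finset.prod_map]
    rw [Finset.prod_congr rfl fun k _ => hO k, Finset.prod_congr rfl fun k _ => hE k]
    rw [← prod_inv]
    rfl
  rw [← hprod, ← hmain]
  norm_cast
  congr 1
  ext p
  simp only [cset, mem_filter, mem_univ, true_and]
  constructor
  · rintro ⟨h1, h2⟩
    constructor
    · intro i hi
      have hci := h1 i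
      rw [hc_def] at hci
      simp only [hi, if_pos, Set.mem_insert_iff, Set.mem_singleton_iff] at hci
      rcases hci with h | h <;> omega
    · intro j hj hodd
      have hjs := h2 j hj
      simp only [hs_def, mem_union, mem_map, mem_range, embO_apply, embE_apply] at hjs
      rw [Nat.odd_iff] at hodd
      rcases hjs with ⟨x, -, hx⟩ | ⟨x, -, hx⟩ <;> omega
  · rintro ⟨h1, h2⟩
    constructor
    · intro j
      rw [hc_def]
      by_cases hodd : Odd j
      · simp only [hodd, if_pos, Set.mem_insert_iff, Set.mem_singleton_iff]
        have := h1 j hodd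
        omega
      · simp [hodd]
    · intro j hj
      have hj1 : 0 < j := p.parts_pos hj
      have hjt : j ≤ t := by
        have := Multiset.single_le_sum (fun a _ => Nat.zero_le a) j hj
        rwa [p.parts_sum] at this
      simp only [hs_def, mem_union, mem_map, mem_range, embO_apply, embE_apply]
      by_cases hodd : Odd j
      · left
        have h3 := h2 j hj hodd
        obtain ⟨r, hr⟩ := hodd
        exact ⟨r - m - 1, by omega, by omega⟩
      · right
        rw [Nat.odd_iff] at hodd
        exact ⟨j / 2 - 1, by omega, by omega⟩

lemma coeff_G (m t : ℕ) :
    coeff t (pochInf (-1) (2 * m + 3) 2 * (pochInf 1 2 2)⁻¹) = #(cset m t) := by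
  have hB : pochInf 1 2 2 = pochFin 1 2 2 (t + 1) * pochInf 1 (2 + 2 * (t + 1)) 2 :=
    pochInf_split 1 (by omega) (by omega) (t + 1)
  rw [hB, PowerSeries.mul_inv_rev]
  rw [show pochInf (-1) (2 * m + 3) 2 *
      ((pochInf 1 (2 + 2 * (t + 1)) 2)⁻¹ * (pochFin 1 2 2 (t + 1))⁻¹) =
      (pochInf (-1) (2 * m + 3) 2 * (pochFin 1 2 2 (t + 1))⁻¹) *
        (pochInf 1 (2 + 2 * (t + 1)) 2)⁻¹ from by ring]
  rw [coeff_mul_of_isOne (isOneUpTo_inv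
    (isOneUpTo_pochInf 1 (show t < 2 + 2 * (t + 1) by omega) (by omega))
    (constantCoeff_pochInf 1 (by omega) (by omega)))]
  rw [mul_comm, coeff_mul_congr_right t _
    (fun e he => coeff_pochInf (-1) (by omega) (by omega) (show e < t + 1 by omega)),
    mul_comm]
  exact coeff_twoFin m t (t + 1) (by omega)

lemma part_le {n : ℕ} (p : n.Partition) {j : ℕ} (hj : j ∈ p.parts) : j ≤ n := by
  have := Multiset.single_le_sum (fun a _ => Nat.zero_le a) j hj
  rwa [p.parts_sum] at this

lemma pmex_nonempty {n : ℕ} (p : n.Partition) : {k : ℕ | 0 < k ∧ k ∉ p.parts}.Nonempty := by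
  refine ⟨n + 1, Nat.succ_pos n, fun h => ?_⟩
  have := part_le p h
  omega

lemma pmex_eq_iff {n : ℕ} (p : n.Partition) (k : ℕ) :
    pmex p = k ↔ 0 < k ∧ k ∉ p.parts ∧ ∀ j, 0 < j → j < k → j ∈ p.parts := by
  have hrfl : sInf {k : ℕ | 0 < k ∧ k ∉ p.parts} = pmex p := rfl
  constructor
  · rintro rfl
    have hmem := Nat.sInf_mem (pmex_nonempty p)
    rw [hrfl] at hmem
    refine ⟨hmem.1, hmem.2, fun j hj1 hj2 => ?_⟩
    by_contra hj
    have hjm : j ∈ {k : ℕ | 0 < k ∧ k ∉ p.parts} := ⟨hj1, hj⟩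
    have := Nat.sInf_le hjm
    rw [hrfl] at this
    omega
  · rintro ⟨h1, h2, h3⟩
    have hle : sInf {k : ℕ | 0 < k ∧ k ∉ p.parts} ≤ k := Nat.sInf_le ⟨h1, h2⟩
    have hmem := Nat.sInf_mem (pmex_nonempty p)
    rw [← hrfl]
    rcases Nat.lt_or_ge (sInf {k : ℕ | 0 < k ∧ k ∉ p.parts}) k with h | h
    · exact absurd (h3 _ hmem.1 h) hmem.2
    · omega

/-- the multiset `{1, 2, ..., 2m}` -/
def S0 (m : ℕ) : Multiset ℕ := (Multiset.range (2 * m)).map (· + 1)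

lemma S0_count (m j : ℕ) : (S0 m).count j = if 1 ≤ j ∧ j ≤ 2 * m then 1 else 0 := by
  have hnodup : (S0 m).Nodup :=
    (Multiset.nodup_range (2 * m)).map fun x y h => by omega
  have hmem : j ∈ S0 m ↔ 1 ≤ j ∧ j ≤ 2 * m := by
    simp only [S0, Multiset.mem_map, Multiset.mem_range]
    constructor
    · rintro ⟨x, hx, rfl⟩; omega
    · rintro ⟨h1, h2⟩; exact ⟨j - 1, by omega, by omega⟩
  split_ifs with h
  · exact Multiset.count_eq_one_of_mem hnodup (hmem.mpr h)
  · exact Multiset.count_eq_zero_of_notMem (fun hc => h (hmem.mp hc))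

lemma S0_sum (m : ℕ) : (S0 m).sum = 2 * m ^ 2 + m := by
  rw [S0]
  have h1 : ((Multiset.range (2 * m)).map (· + 1)).sum
      = ∑ i ∈ range (2 * m), (i + 1) := by
    rw [Finset.sum]
    rfl
  have h2 := Finset.sum_range_id_mul_two (2 * m)
  have h6 : 2 * m * (2 * m - 1) + 2 * m = 4 * (m * m) := by
    rcases m with _ | k
    · simp
    · have h5 : 2 * (k + 1) - 1 = 2 * k + 1 := by omega
      rw [h5]
      ring
  have h7 : (∑ i ∈ range (2 * m), i) * 2 + 2 * m = 4 * (m * m) := by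
    rw [h2]
    exact h6
  have h3 : m ^ 2 = m * m := pow_two m
  rw [h1, Finset.sum_add_distrib, Finset.sum_const, card_range, smul_eq_mul, mul_one]
  omega

lemma pmex_fiber_card (n m : ℕ) :
    #(Finset.univ.filter fun p : n.Partition =>
        (OddDistinct p ∧ Odd (pmex p)) ∧ pmex p / 2 = m) =
      if 2 * m ^ 2 + m ≤ n then #(cset m (n - (2 * m ^ 2 + m))) else 0 := by
  classical
  have hkey : ∀ p : n.Partition,
      ((OddDistinct p ∧ Odd (pmex p)) ∧ pmex p / 2 = m) ↔
        (OddDistinct p ∧ pmex p = 2 * m + 1) := by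
    intro p
    constructor
    · rintro ⟨⟨h1, h2⟩, h3⟩
      rw [Nat.odd_iff] at h2
      exact ⟨h1, by omega⟩
    · rintro ⟨h1, h2⟩
      exact ⟨⟨h1, by rw [h2]; exact ⟨m, by ring⟩⟩, by omega⟩
  rw [Finset.filter_congr fun p _ => (hkey p)]
  split_ifs with hle
  · -- bijection with cset m (n - (2m²+m))
    refine Finset.card_bij'
      (fun p hp => ⟨p.parts - S0 m, ?_, ?_⟩)
      (fun q hq => ⟨q.parts + S0 m, ?_, ?_⟩) ?_ ?_ ?_ ?_
    case _ =>
      intro j hj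
      exact p.parts_pos (Multiset.mem_of_le (tsub_le_self) hj)
    case _ =>
      simp only [mem_filter, mem_univ, true_and] at hp
      obtain ⟨h1, h2⟩ := hp
      rw [pmex_eq_iff] at h2
      have hS0le : S0 m ≤ p.parts := by
        rw [Multiset.le_iff_count]
        intro j
        rw [S0_count]
        split_ifs with h
        · rw [Nat.one_le_iff_ne_zero, Ne, Multiset.count_eq_zero, not_not]
          exact h2.2.2 j (by omega) (by omega)
        · exact Nat.zero_le _
      have := tsub_add_cancel_of_le hS0le
      have hsum : (p.parts - S0 m).sum + (S0 m).sum = n := by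
        conv_rhs => rw [← p.parts_sum, ← this]
        rw [Multiset.sum_add]
      rw [S0_sum] at hsum
      omega
    case _ =>
      intro j hj
      rw [Multiset.mem_add] at hj
      rcases hj with hj | hj
      · exact q.parts_pos hj
      · simp only [S0, Multiset.mem_map, Multiset.mem_range] at hj
        omega
    case _ =>
      rw [Multiset.sum_add, q.parts_sum, S0_sum]
      omega
    case _ =>
      intro p hp
      simp only [mem_filter, mem_univ, true_and] at hp ⊢
      obtain ⟨h1, h2⟩ := hp
      rw [pmex_eq_iff] at h2
      simp only [cset, mem_filter, mem_univ, true_and]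
      constructor
      · intro i hi
        simp only [Multiset.count_sub]
        calc p.parts.count i - (S0 m).count i ≤ p.parts.count i := Nat.sub_le _ _
          _ ≤ 1 := h1 i hi
      · intro j hj hodd
        by_contra hlt
        have hcount : 0 < (p.parts - S0 m).count j := Multiset.count_pos.mpr hj
        rw [Multiset.count_sub, S0_count] at hcount
        rw [Nat.odd_iff] at hodd
        have hj2m : 1 ≤ j ∧ j ≤ 2 * m := by
          constructor
          · omega
          · -- j odd, j < 2m+3, j ≠ 2m+1 (else count = 0), j ≠ 2m+2 (even)
            rcases Nat.lt_or_ge j (2 * m + 1) with h | h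
            · omega
            · have : j = 2 * m + 1 := by omega
              rw [this] at hcount
              have := Multiset.count_eq_zero_of_notMem h2.2.1
              omega
        rw [if_pos hj2m] at hcount
        have hle1 : p.parts.count j ≤ 1 := h1 j ⟨(j-1)/2, by omega⟩
        omega
    case _ =>
      intro q hq
      simp only [cset, mem_filter, mem_univ, true_and] at hq
      obtain ⟨h1, h2⟩ := hq
      simp only [mem_filter, mem_univ, true_and]
      have hq2m1 : ∀ j, Odd j → j ≤ 2 * m + 1 → j ∉ q.parts := by
        intro j hodd hle hj
        have := h2 j hj hodd
        omega
      constructor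
      · intro i hi
        rw [Multiset.count_add, S0_count]
        rw [Nat.odd_iff] at hi
        split_ifs with h
        · have : q.parts.count i = 0 := Multiset.count_eq_zero_of_notMem
            (hq2m1 i (by rw [Nat.odd_iff]; omega) (by omega))
          omega
        · have := h1 i (by rw [Nat.odd_iff]; omega)
          omega
      · rw [pmex_eq_iff]
        refine ⟨by omega, ?_, ?_⟩
        · intro hmem
          rw [Multiset.mem_add] at hmem
          rcases hmem with hmem | hmem
          · exact hq2m1 (2 * m + 1) ⟨m, by ring⟩ le_rfl hmem
          · simp only [S0, Multiset.mem_map, Multiset.mem_range] at hmem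
            omega
        · intro j hj1 hj2
          rw [Multiset.mem_add]
          right
          simp only [S0, Multiset.mem_map, Multiset.mem_range]
          exact ⟨j - 1, by omega, by omega⟩
    case _ =>
      intro p hp
      simp only [mem_filter, mem_univ, true_and] at hp
      obtain ⟨h1, h2⟩ := hp
      rw [pmex_eq_iff] at h2
      have hS0le : S0 m ≤ p.parts := by
        rw [Multiset.le_iff_count]
        intro j
        rw [S0_count]
        split_ifs with h
        · rw [Nat.one_le_iff_ne_zero, Ne, Multiset.count_eq_zero, not_not]
          exact h2.2.2 j (by omega) (by omega)
        · exact Nat.zero_le _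
      apply Nat.Partition.ext
      exact tsub_add_cancel_of_le hS0le
    case _ =>
      intro q hq
      apply Nat.Partition.ext
      exact add_tsub_cancel_right _ _
  · rw [Finset.card_eq_zero, Finset.filter_eq_empty_iff]
    intro p _
    rintro ⟨h1, h2⟩
    rw [pmex_eq_iff] at h2
    have hS0le : S0 m ≤ p.parts := by
      rw [Multiset.le_iff_count]
      intro j
      rw [S0_count]
      split_ifs with h
      · rw [Nat.one_le_iff_ne_zero, Ne, Multiset.count_eq_zero, not_not]
        exact h2.2.2 j (by omega) (by omega)
      · exact Nat.zero_le _
    obtain ⟨u, hu⟩ := Multiset.le_iff_exists_add.mp hS0le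
    have hsum : n = (S0 m).sum + u.sum := by
      rw [← Multiset.sum_add, ← hu, p.parts_sum]
    rw [S0_sum] at hsum
    omega

lemma pmex_le {n : ℕ} (p : n.Partition) : pmex p ≤ n + 1 :=
  Nat.sInf_le ⟨Nat.succ_pos n, fun h => by have := part_le p h; omega⟩

lemma aood_eq_sum (n : ℕ) :
    aood n = ∑ m ∈ range (n + 1),
      if 2 * m ^ 2 + m ≤ n then #(cset m (n - (2 * m ^ 2 + m))) else 0 := by
  classical
  rw [aood, Finset.card_eq_sum_card_fiberwise
    (f := fun p : n.Partition => pmex p / 2) (t := range (n + 1)) (fun p _ => by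
      rw [Finset.mem_coe, mem_range]
      show pmex p / 2 < n + 1
      have := pmex_le p
      omega)]
  refine Finset.sum_congr rfl fun m _ => ?_
  rw [Finset.filter_filter]
  exact pmex_fiber_card n m

lemma continuous_mulLeft (c : PowerSeries ℚ) : Continuous fun f : PowerSeries ℚ => c * f := by
  apply continuous_pi
  intro j
  have hfun : (fun f : PowerSeries ℚ => (c * f) j) =
      fun f : PowerSeries ℚ =>
        ∑ p ∈ Finset.HasAntidiagonal.antidiagonal (j ()), coeff p.1 c * f (Finsupp.single () p.2) := by
    funext f
    rw [apply_eq_coeff (c * f) j, coeff_mul]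
    refine Finset.sum_congr rfl fun p _ => ?_
    rw [apply_eq_coeff f (Finsupp.single () p.2), Finsupp.single_eq_same]
  rw [hfun]
  exact continuous_finset_sum _ fun p _ => continuous_const.mul (continuous_apply _)


end Aux

theorem stmt_0 :
    (∑' n : ℕ, PowerSeries.C (aood n : ℚ) * PowerSeries.X ^ n) =
      pochInf (-1) 1 2 * (pochInf 1 2 2)⁻¹ *
        ∑' n : ℕ, PowerSeries.X ^ (2 * n ^ 2 + n) * (pochFin (-1) 1 2 (n + 1))⁻¹ := by
  classical
  have hL := Aux.hasSum_of_coeff (fun k => PowerSeries.C (aood k : ℚ) * PowerSeries.X ^ k) (by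
    intro d k hdk
    rw [PowerSeries.coeff_C_mul, PowerSeries.coeff_X_pow, if_neg (by omega), mul_zero])
  set g' : ℕ → PowerSeries ℚ :=
    fun k => PowerSeries.X ^ (2 * k ^ 2 + k) * (pochFin (-1) 1 2 (k + 1))⁻¹ with hg'def
  have hordaux : ∀ k d : ℕ, d < k → ¬ (2 * k ^ 2 + k ≤ d) := by
    intro k d hdk
    have := Nat.le_add_left k (2 * k ^ 2)
    omega
  have hS' := Aux.hasSum_of_coeff g' (by
    intro d k hdk
    rw [hg'def]
    simp only
    rw [PowerSeries.coeff_X_pow_mul', if_neg (hordaux k d hdk)])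
  set S' : PowerSeries ℚ :=
    PowerSeries.mk fun d => ∑ k ∈ range (d + 1), coeff d (g' k) with hS'def
  set c : PowerSeries ℚ := pochInf (-1) 1 2 * (pochInf 1 2 2)⁻¹ with hcdef
  have hmap' : HasSum (fun k => c * g' k) (c * S') := by
    have := HasSum.map hS' (AddMonoidHom.mulLeft c) (Aux.continuous_mulLeft c)
    exact this
  have hcg : ∀ k : ℕ, c * g' k = PowerSeries.X ^ (2 * k ^ 2 + k) *
      (pochInf (-1) (2 * k + 3) 2 * (pochInf 1 2 2)⁻¹) := by
    intro k
    have hsplit := Aux.pochInf_split (-1) (b := 1) (d := 2) le_rfl (by omega) (k + 1)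
    rw [show (1 : ℕ) + 2 * (k + 1) = 2 * k + 3 from by ring] at hsplit
    have hF : pochFin (-1) 1 2 (k + 1) * (pochFin (-1) 1 2 (k + 1))⁻¹ = 1 :=
      PowerSeries.mul_inv_cancel _ (by
        rw [Aux.constantCoeff_pochFin (-1) le_rfl]
        exact one_ne_zero)
    rw [hcdef, hg'def]
    simp only
    rw [hsplit]
    generalize hFi : (pochFin (-1) 1 2 (k + 1))⁻¹ = Fi at hF ⊢
    generalize hBi : (pochInf 1 2 2)⁻¹ = Bi
    generalize hFF : pochFin (-1) 1 2 (k + 1) = F at hF ⊢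
    calc F * pochInf (-1) (2 * k + 3) 2 * Bi * (PowerSeries.X ^ (2 * k ^ 2 + k) * Fi)
        = PowerSeries.X ^ (2 * k ^ 2 + k) * (pochInf (-1) (2 * k + 3) 2 * Bi) * (F * Fi) := by
          ring
      _ = PowerSeries.X ^ (2 * k ^ 2 + k) * (pochInf (-1) (2 * k + 3) 2 * Bi) := by
          rw [hF, mul_one]
  simp only [hcg] at hmap'
  have hL2 := Aux.hasSum_of_coeff (fun k => PowerSeries.X ^ (2 * k ^ 2 + k) *
      (pochInf (-1) (2 * k + 3) 2 * (pochInf 1 2 2)⁻¹)) (by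
    intro d k hdk
    rw [PowerSeries.coeff_X_pow_mul', if_neg (hordaux k d hdk)])
  have hceq := hmap'.unique hL2
  rw [hL.tsum_eq, hS'.tsum_eq, hceq]
  ext d
  rw [coeff_mk, coeff_mk]
  have hLcoeff : ∑ k ∈ range (d + 1),
      coeff d (PowerSeries.C (aood k : ℚ) * PowerSeries.X ^ k) = (aood d : ℚ) := by
    rw [Finset.sum_congr rfl (fun k _ => by
      rw [PowerSeries.coeff_C_mul, PowerSeries.coeff_X_pow, mul_ite, mul_one, mul_zero])]
    rw [Finset.sum_ite_eq (range (d + 1)) d (fun k => (aood k : ℚ)),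
      if_pos (self_mem_range_succ d)]
  rw [hLcoeff]
  have hR : ∀ k : ℕ, coeff d (PowerSeries.X ^ (2 * k ^ 2 + k) *
      (pochInf (-1) (2 * k + 3) 2 * (pochInf 1 2 2)⁻¹)) =
      if 2 * k ^ 2 + k ≤ d then ((#(Aux.cset k (d - (2 * k ^ 2 + k))) : ℕ) : ℚ) else 0 := by
    intro k
    rw [PowerSeries.coeff_X_pow_mul']
    split_ifs with h
    · exact Aux.coeff_G k (d - (2 * k ^ 2 + k))
    · rfl
  rw [Finset.sum_congr rfl fun k _ => hR k]
  rw [Aux.aood_eq_sum d]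
  push_cast
  rfl

end
end

section
/- In ℚ⟦X⟧ one has the identity Σ_{n=0}^∞ σ_od moex(n)·X^n = ( (−X; X²)_∞ / (X²; X²)_∞ ) · ( 1 + 2·Σ_{n=1}^∞ X^{n²} / (−X; X²)_n ). (The second factor equals 1 + σ*(−X), where σ*(q) = 2Σ_{n≥1} (−1)^n q^{n²}/(q;q²)_n is Ramanujan's function studied by Cohen.) -/
open PowerSeries Finset
open scoped Classical

noncomputable section

instance inst_s6 : T2Space (PowerSeries ℚ) :=
  @Pi.t2Space (Unit →₀ ℕ) (fun _ => ℚ) (fun _ => inferInstance) (fun _ => inferInstance)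

/-- agreement of coefficients up to degree n -/
def Agr (n : ℕ) (f g : PowerSeries ℚ) : Prop := ∀ j ≤ n, coeff j f = coeff j g

lemma Agr.mono {n m : ℕ} {f g : PowerSeries ℚ} (h : Agr n f g) (hm : m ≤ n) : Agr m f g :=
  fun j hj => h j (hj.trans hm)

lemma Agr.refl (n : ℕ) (f : PowerSeries ℚ) : Agr n f f := fun _ _ => rfl

lemma Agr.mul {n : ℕ} {f f' g g' : PowerSeries ℚ} (hf : Agr n f f') (hg : Agr n g g') :
    Agr n (f * g) (f' * g') := by
  intro j hj
  rw [coeff_mul, coeff_mul]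
  refine Finset.sum_congr rfl fun p hp => ?_
  rw [Finset.HasAntidiagonal.mem_antidiagonal] at hp
  rw [hf p.1 (by omega), hg p.2 (by omega)]

lemma Agr.inv {n : ℕ} {f f' : PowerSeries ℚ} (hf : Agr n f f')
    (h0 : constantCoeff f ≠ 0) : Agr n f⁻¹ f'⁻¹ := by
  have hc : constantCoeff f = constantCoeff f' := by
    simpa [coeff_zero_eq_constantCoeff] using hf 0 (Nat.zero_le _)
  intro j hj
  induction j using Nat.strong_induction_on with
  | _ j ih =>
    rw [coeff_inv, coeff_inv, hc]
    split_ifs with h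
    · rfl
    · congr 1
      refine Finset.sum_congr rfl fun p hp => ?_
      rw [Finset.HasAntidiagonal.mem_antidiagonal] at hp
      split_ifs with h2
      · rw [hf p.1 (by omega), ih p.2 h2 (by omega)]
      · rfl

lemma Agr.prod_one {n : ℕ} {t : Finset ℕ} {g : ℕ → PowerSeries ℚ}
    (h : ∀ i ∈ t, Agr n (g i) 1) : Agr n (∏ i ∈ t, g i) 1 := by
  induction t using Finset.cons_induction with
  | empty => simpa using Agr.refl n 1
  | cons a t ha ih =>
    rw [Finset.prod_cons]
    have := (h a (Finset.mem_cons_self a t)).mul (ih fun i hi => h i (Finset.mem_cons_of_mem hi))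
    simpa using this

lemma coeff_prod_subset {n : ℕ} {t u : Finset ℕ} {g : ℕ → PowerSeries ℚ} (hsub : t ⊆ u)
    (hg : ∀ i ∈ u, i ∉ t → Agr n (g i) 1) :
    coeff n (∏ i ∈ u, g i) = coeff n (∏ i ∈ t, g i) := by
  rw [← Finset.prod_sdiff hsub]
  have h1 : Agr n (∏ i ∈ u \ t, g i) 1 :=
    Agr.prod_one fun i hi => by
      rw [Finset.mem_sdiff] at hi; exact hg i hi.1 hi.2
  have := h1.mul (Agr.refl n (∏ i ∈ t, g i))
  rw [one_mul] at this
  exact this n le_rfl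

lemma apply_eq_coeff (φ : PowerSeries ℚ) (d : Unit →₀ ℕ) :
    φ d = coeff (d ()) φ := by
  have : d = Finsupp.single () (d ()) := (Finsupp.unique_single d)
  rw [PowerSeries.coeff, MvPowerSeries.coeff_apply, ← this]

lemma hasSum_of_low (s : ℕ → PowerSeries ℚ) (h : ∀ k j, j < k → coeff j (s k) = 0) :
    HasSum s (PowerSeries.mk fun n => ∑ k ∈ range (n + 1), coeff n (s k)) := by
  show Filter.Tendsto _ _ _
  apply tendsto_pi_nhds.2
  intro d
  set n := d () with hn
  have key : ∀ t : Finset ℕ, range (n + 1) ⊆ t →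
      (∑ i ∈ t, s i) d = (PowerSeries.mk fun n => ∑ k ∈ range (n + 1), coeff n (s k)) d := by
    intro t ht
    rw [apply_eq_coeff (∑ i ∈ t, s i) d, apply_eq_coeff (PowerSeries.mk fun n => ∑ k ∈ range (n + 1), coeff n (s k)) d, ← hn, coeff_mk, map_sum]
    refine (Finset.sum_subset ht fun k _ hk => ?_).symm
    rw [Finset.mem_range, not_lt] at hk
    exact h k n (by omega)
  refine Filter.Tendsto.congr' ?_ tendsto_const_nhds
  filter_upwards [Filter.eventually_ge_atTop (range (n + 1))] with t ht
  exact (key t ht).symm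

lemma tsum_low_agr (s : ℕ → PowerSeries ℚ) (h : ∀ k j, j < k → coeff j (s k) = 0) (n : ℕ) :
    Agr n (∑' k, s k) (∑ k ∈ range (n + 1), s k) := by
  rw [(hasSum_of_low s h).tsum_eq]
  intro j hj
  rw [coeff_mk, map_sum]
  refine Finset.sum_subset (by intro x; simp only [mem_range]; omega) fun k _ hk => ?_
  rw [Finset.mem_range, not_lt] at hk
  exact h k j (by omega)

lemma hasProd_of_low (g : ℕ → PowerSeries ℚ) (h : ∀ k, Agr k (g k) 1) :
    HasProd g (PowerSeries.mk fun n => coeff n (∏ k ∈ range (n + 1), g k)) := by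
  show Filter.Tendsto _ _ _
  apply tendsto_pi_nhds.2
  intro d
  set n := d () with hn
  have key : ∀ t : Finset ℕ, range (n + 1) ⊆ t →
      (∏ i ∈ t, g i) d = (PowerSeries.mk fun n => coeff n (∏ k ∈ range (n + 1), g k)) d := by
    intro t ht
    rw [apply_eq_coeff (∏ i ∈ t, g i) d, apply_eq_coeff (PowerSeries.mk fun n => coeff n (∏ k ∈ range (n + 1), g k)) d, ← hn, coeff_mk]
    exact coeff_prod_subset ht fun i _ hi => by
      rw [Finset.mem_range, not_lt] at hi
      exact (h i).mono (by omega)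
  refine Filter.Tendsto.congr' ?_ tendsto_const_nhds
  filter_upwards [Filter.eventually_ge_atTop (range (n + 1))] with t ht
  exact (key t ht).symm

lemma tprod_low_agr (g : ℕ → PowerSeries ℚ) (h : ∀ k, Agr k (g k) 1) (n m : ℕ) (hm : n < m) :
    Agr n (∏' k, g k) (∏ k ∈ range m, g k) := by
  rw [(hasProd_of_low g h).tprod_eq]
  intro j hj
  rw [coeff_mk]
  have h1 : coeff j (∏ k ∈ range m, g k) = coeff j (∏ k ∈ range (j+1), g k) := by
    refine coeff_prod_subset (by intro x; simp only [mem_range]; omega) fun i _ hi => ?_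
    rw [Finset.mem_range, not_lt] at hi
    exact (h i).mono (by omega)
  rw [h1]
lemma factor_agr (ε : ℚ) {b d : ℕ} (hb : 1 ≤ b) (hd : 1 ≤ d) (k : ℕ) :
    Agr k (1 - PowerSeries.C ε * PowerSeries.X ^ (b + d * k)) 1 := by
  intro j hj
  have : j < b + d * k := by nlinarith
  simp [map_sub, coeff_X_pow, Nat.ne_of_lt this]

lemma constantCoeff_pochFin (ε : ℚ) {b : ℕ} (hb : 1 ≤ b) (d m : ℕ) :
    constantCoeff (pochFin ε b d m) = 1 := by
  rw [pochFin, map_prod]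
  refine Finset.prod_eq_one fun k _ => ?_
  have : b + d * k ≠ 0 := by omega
  simp [this]
  right; omega

lemma pochInf_agr (ε : ℚ) {b d n m : ℕ} (hb : 1 ≤ b) (hd : 1 ≤ d) (hm : n < m) :
    Agr n (pochInf ε b d) (pochFin ε b d m) :=
  tprod_low_agr _ (factor_agr ε hb hd) n m hm

lemma pochFin_odd (m : ℕ) :
    pochFin (-1) 1 2 m = ∏ k ∈ range m, (1 + PowerSeries.X ^ (2 * k + 1)) := by
  refine Finset.prod_congr rfl fun k _ => ?_
  rw [show 1 + 2 * k = 2 * k + 1 from by omega]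
  simp only [map_neg, map_one]
  ring

lemma pochFin_even (m : ℕ) :
    pochFin 1 2 2 m = ∏ k ∈ range m, (1 - PowerSeries.X ^ (2 * k + 2)) := by
  refine Finset.prod_congr rfl fun k _ => ?_
  rw [show 2 + 2 * k = 2 * k + 2 from by omega]
  simp only [map_one, one_mul]

lemma prod_inv {t : Finset ℕ} {f : ℕ → PowerSeries ℚ}
    (hf : ∀ i ∈ t, constantCoeff (f i) ≠ 0) :
    (∏ i ∈ t, f i)⁻¹ = ∏ i ∈ t, (f i)⁻¹ := by
  induction t using Finset.cons_induction with
  | empty => simp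
  | cons a t ha ih =>
    rw [Finset.prod_cons, Finset.prod_cons, PowerSeries.mul_inv_rev,
      ih fun i hi => hf i (Finset.mem_cons_of_mem hi), mul_comm]
variable {α : Type*}

open Finset

open scoped Classical

/-- The partial product for the generating function for odd partitions.
TODO: As `m` tends to infinity, this converges (in the `X`-adic topology).

If `m` is sufficiently large, the `i`th coefficient gives the number of odd partitions of the
natural number `i`: proved in `oddGF_prop`.
It is stated for an arbitrary field `α`, though it usually suffices to use `ℚ` or `ℝ`.
-/
def partialOddGF (m : ℕ) [Field α] :=
  ∏ i ∈ range m, (1 - (X : PowerSeries α) ^ (2 * i + 1))⁻¹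

/-- The partial product for the generating function for distinct partitions.
TODO: As `m` tends to infinity, this converges (in the `X`-adic topology).

If `m` is sufficiently large, the `i`th coefficient gives the number of distinct partitions of the
natural number `i`: proved in `distinctGF_prop`.
It is stated for an arbitrary commutative semiring `α`, though it usually suffices to use `ℕ`, `ℚ`
or `ℝ`.
-/
def partialDistinctGF (m : ℕ) [CommSemiring α] :=
  ∏ i ∈ range m, (1 + (X : PowerSeries α) ^ (i + 1))

open Finset.HasAntidiagonal

universe u
variable {ι : Type u}

/-- A convenience constructor for the power series whose coefficients indicate a subset. -/
def indicatorSeries (α : Type*) [Semiring α] (s : Set ℕ) : PowerSeries α :=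
  PowerSeries.mk fun n => if n ∈ s then 1 else 0

theorem coeff_indicator (s : Set ℕ) [Semiring α] (n : ℕ) :
    coeff n (indicatorSeries α s) = if n ∈ s then 1 else 0 :=
  coeff_mk _ _

theorem coeff_indicator_pos (s : Set ℕ) [Semiring α] (n : ℕ) (h : n ∈ s) :
    coeff n (indicatorSeries α s) = 1 := by rw [coeff_indicator, if_pos h]

theorem coeff_indicator_neg (s : Set ℕ) [Semiring α] (n : ℕ) (h : n ∉ s) :
    coeff n (indicatorSeries α s) = 0 := by rw [coeff_indicator, if_neg h]

theorem constantCoeff_indicator (s : Set ℕ) [Semiring α] :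
    constantCoeff (indicatorSeries α s) = if 0 ∈ s then 1 else 0 :=
  rfl

theorem two_series (i : ℕ) [Semiring α] :
    1 + (X : PowerSeries α) ^ i.succ = indicatorSeries α {0, i.succ} := by
  ext n
  simp only [coeff_indicator, coeff_one, coeff_X_pow, Set.mem_insert_iff, Set.mem_singleton_iff,
    map_add]
  cases' n with d
  · simp [(Nat.succ_ne_zero i).symm]
  · simp [Nat.succ_ne_zero d]

theorem num_series' [Field α] (i : ℕ) :
    (1 - (X : PowerSeries α) ^ (i + 1))⁻¹ = indicatorSeries α {k | i + 1 ∣ k} := by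
  rw [PowerSeries.inv_eq_iff_mul_eq_one]
  · ext n
    cases n with
    | zero => simp [mul_sub, zero_pow, constantCoeff_indicator]
    | succ n =>
      simp only [coeff_one, if_false, mul_sub, mul_one, coeff_indicator,
        LinearMap.map_sub, reduceCtorEq]
      simp_rw [coeff_mul, coeff_X_pow, coeff_indicator, @boole_mul _ _ _ _]
      erw [@sum_ite _ _ _ _ _ (fun _ => Classical.propDecidable _), sum_ite]
      simp_rw [@filter_filter _ _ _ _ _, sum_const_zero, add_zero, sum_const, nsmul_eq_mul, mul_one,
        sub_eq_iff_eq_add, zero_add]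
      symm
      split_ifs with h
      · suffices #{a ∈ antidiagonal (n + 1) | i + 1 ∣ a.fst ∧ a.snd = i + 1} = 1 by
          simp only [Set.mem_setOf_eq]; convert congr_arg ((↑) : ℕ → α) this; norm_cast
        rw [card_eq_one]
        cases' h with p hp
        refine ⟨((i + 1) * (p - 1), i + 1), ?_⟩
        ext ⟨a₁, a₂⟩
        simp only [mem_filter, Prod.mk.injEq, HasAntidiagonal.mem_antidiagonal, mem_singleton]
        constructor
        · rintro ⟨a_left, ⟨a, rfl⟩, rfl⟩
          refine ⟨?_, rfl⟩
          rw [Nat.mul_sub_left_distrib, ← hp, ← a_left, mul_one, Nat.add_sub_cancel]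
        · rintro ⟨rfl, rfl⟩
          match p with
          | 0 => rw [mul_zero] at hp; cases hp
          | p + 1 => rw [hp]; simp [mul_add]
      · suffices #{a ∈ antidiagonal (n + 1) | i + 1 ∣ a.fst ∧ a.snd = i + 1} = 0 by
          simp only [Set.mem_setOf_eq]; convert congr_arg ((↑) : ℕ → α) this; norm_cast
        rw [card_eq_zero]
        apply eq_empty_of_forall_notMem
        simp only [Prod.forall, mem_filter, not_and, HasAntidiagonal.mem_antidiagonal]
        rintro _ h₁ h₂ ⟨a, rfl⟩ rfl
        apply h
        simp [← h₂]
  · simp [zero_pow]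


-- The main workhorse of the partition theorem proof.
theorem partialGF_prop (α : Type*) [CommSemiring α] (n : ℕ) (s : Finset ℕ) (hs : ∀ i ∈ s, 0 < i)
    (c : ℕ → Set ℕ) (hc : ∀ i, i ∉ s → 0 ∈ c i) :
    #{p : n.Partition | (∀ j, p.parts.count j ∈ c j) ∧ ∀ j ∈ p.parts, j ∈ s} =
      coeff n (∏ i ∈ s, indicatorSeries α ((· * i) '' c i)) := by
  simp_rw [coeff_prod, coeff_indicator, prod_boole, sum_boole]
  apply congr_arg
  simp only [mem_univ, forall_true_left, not_and, not_forall, exists_prop,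
    Set.mem_image, not_exists]
  set φ : (a : Nat.Partition n) →
    a ∈ filter (fun p ↦ (∀ (j : ℕ), Multiset.count j p.parts ∈ c j) ∧ ∀ j ∈ p.parts, j ∈ s) univ →
    ℕ →₀ ℕ := fun p _ => {
      toFun := fun i => Multiset.count i p.parts • i
      support := Finset.filter (fun i => i ≠ 0) p.parts.toFinset
      mem_support_toFun := fun a => by
        simp only [smul_eq_mul, ne_eq, mul_eq_zero, Multiset.count_eq_zero]
        rw [not_or, not_not]
        simp only [Multiset.mem_toFinset, not_not, mem_filter] }
  refine Finset.card_bij φ ?_ ?_ ?_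
  · intro a ha
    simp only [φ, not_forall, not_exists, not_and, exists_prop, mem_filter]
    rw [mem_finsuppAntidiag]
    dsimp only [ne_eq, smul_eq_mul, id_eq, eq_mpr_eq_cast, le_eq_subset, Finsupp.coe_mk]
    simp only [mem_univ, forall_true_left, not_and, not_forall, exists_prop,
      mem_filter, true_and] at ha
    refine ⟨⟨?_, fun i ↦ ?_⟩, fun i _ ↦ ⟨a.parts.count i, ha.1 i, rfl⟩⟩
    · conv_rhs => simp [← a.parts_sum]
      rw [sum_multiset_count_of_subset _ s]
      · simp only [smul_eq_mul]
      · intro i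
        simp only [Multiset.mem_toFinset, not_not, mem_filter]
        apply ha.2
    · simp only [ne_eq, Multiset.mem_toFinset, not_not, mem_filter, and_imp]
      exact fun hi _ ↦ ha.2 i hi
  · intro p₁ hp₁ p₂ hp₂ h
    apply Nat.Partition.ext
    simp only [true_and, mem_univ, mem_filter] at hp₁ hp₂
    ext i
    simp only [φ, ne_eq, Multiset.mem_toFinset, not_not, smul_eq_mul, Finsupp.mk.injEq] at h
    by_cases hi : i = 0
    · rw [hi]
      rw [Multiset.count_eq_zero_of_notMem]
      · rw [Multiset.count_eq_zero_of_notMem]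
        intro a; exact Nat.lt_irrefl 0 (hs 0 (hp₂.2 0 a))
      intro a; exact Nat.lt_irrefl 0 (hs 0 (hp₁.2 0 a))
    · rw [← mul_left_inj' hi]
      rw [funext_iff] at h
      exact h.2 i
  · simp only [φ, mem_filter, mem_finsuppAntidiag, mem_univ, exists_prop, true_and, and_assoc]
    rintro f ⟨hf, hf₃, hf₄⟩
    have hf' : f ∈ finsuppAntidiag s n := mem_finsuppAntidiag.mpr ⟨hf, hf₃⟩
    simp only [mem_finsuppAntidiag] at hf'
    refine ⟨⟨∑ i ∈ s, Multiset.replicate (f i / i) i, ?_, ?_⟩, ?_, ?_, ?_⟩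
    · intro i hi
      simp only [exists_prop, Multiset.mem_sum, mem_map, Function.Embedding.coeFn_mk] at hi
      rcases hi with ⟨t, ht, z⟩
      apply hs
      rwa [Multiset.eq_of_mem_replicate z]
    · simp_rw [Multiset.sum_sum, Multiset.sum_replicate, Nat.nsmul_eq_mul]
      rw [← hf'.1]
      refine sum_congr rfl fun i hi => Nat.div_mul_cancel ?_
      rcases hf₄ i hi with ⟨w, _, hw₂⟩
      rw [← hw₂]
      exact dvd_mul_left _ _
    · intro i
      simp_rw [Multiset.count_sum', Multiset.count_replicate, sum_ite_eq']
      split_ifs with h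
      · rcases hf₄ i h with ⟨w, hw₁, hw₂⟩
        rwa [← hw₂, Nat.mul_div_cancel _ (hs i h)]
      · exact hc _ h
    · intro i hi
      rw [Multiset.mem_sum] at hi
      rcases hi with ⟨j, hj₁, hj₂⟩
      rwa [Multiset.eq_of_mem_replicate hj₂]
    · ext i
      simp_rw [Multiset.count_sum', Multiset.count_replicate, sum_ite_eq']
      simp only [ne_eq, Multiset.mem_toFinset, not_not, smul_eq_mul, ite_mul,
        zero_mul, Finsupp.coe_mk]
      split_ifs with h
      · apply Nat.div_mul_cancel
        rcases hf₄ i h with ⟨w, _, hw₂⟩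
        apply Dvd.intro_left _ hw₂
      · apply symm
        rw [← Finsupp.notMem_support_iff]
        exact notMem_mono hf'.2 h

/-- the generic factor: `1 + X^i` for odd `i`, `(1-X^i)⁻¹` for even `i` -/
def Fct (i : ℕ) : PowerSeries ℚ :=
  if Odd i then 1 + PowerSeries.X ^ i else (1 - PowerSeries.X ^ i)⁻¹

lemma constantCoeff_one_sub_X_pow {i : ℕ} (hi : 0 < i) :
    constantCoeff (1 - PowerSeries.X ^ i : PowerSeries ℚ) ≠ 0 := by
  have : i ≠ 0 := by omega
  simp [this]

lemma agr_one_sub_X_pow {n i : ℕ} (hni : n < i) : Agr n (1 - PowerSeries.X ^ i) 1 := by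
  intro j hj
  have : j ≠ i := by omega
  simp [coeff_X_pow, this]

lemma Fct_agr_one {n i : ℕ} (hni : n < i) : Agr n (Fct i) 1 := by
  rw [Fct]
  split_ifs with h
  · intro j hj
    have : j ≠ i := by omega
    simp [coeff_X_pow, this]
  · have := (agr_one_sub_X_pow hni).inv (constantCoeff_one_sub_X_pow (by omega))
    rwa [inv_one] at this

/-- multiplicity constraints: odd parts distinct -/
def cOd (i : ℕ) : Set ℕ := if Odd i then {0, 1} else Set.univ

lemma coeff_G (m N : ℕ) :
    coeff N (pochInf (-1) 1 2 * (pochInf 1 2 2)⁻¹ * (pochFin (-1) 1 2 m)⁻¹) =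
      ((Finset.univ.filter fun p : N.Partition =>
        (∀ j, Odd j → p.parts.count j ≤ 1) ∧ ∀ j ∈ p.parts, Odd j → 2 * m + 1 ≤ j).card : ℚ) := by
  classical
  set M := N + m + 1 with hM
  -- replace infinite products by finite truncations
  have h2 : Agr N (pochInf 1 2 2) (pochFin 1 2 2 M) :=
    pochInf_agr 1 (by omega) (by omega) (by omega)
  have hB0 : constantCoeff (pochInf 1 2 2) ≠ 0 := by
    have := h2 0 (Nat.zero_le _)
    rw [coeff_zero_eq_constantCoeff] at this
    rw [this, constantCoeff_pochFin 1 (by omega)]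
    exact one_ne_zero
  have h4 : Agr N (pochInf (-1) 1 2 * (pochInf 1 2 2)⁻¹ * (pochFin (-1) 1 2 m)⁻¹)
      (pochFin (-1) 1 2 M * (pochFin 1 2 2 M)⁻¹ * (pochFin (-1) 1 2 m)⁻¹) :=
    ((pochInf_agr (-1) (by omega) (by omega) (by omega)).mul (h2.inv hB0)).mul (Agr.refl _ _)
  rw [h4 N le_rfl]
  -- algebraic rearrangement of the truncated expression
  have hsplit : pochFin (-1) 1 2 M =
      pochFin (-1) 1 2 m * ∏ k ∈ Finset.Ico m M, (1 + PowerSeries.X ^ (2 * k + 1)) := by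
    rw [pochFin_odd, pochFin_odd, Finset.prod_range_mul_prod_Ico _ (by omega : m ≤ M)]
  have hGG : pochFin (-1) 1 2 M * (pochFin 1 2 2 M)⁻¹ * (pochFin (-1) 1 2 m)⁻¹ =
      (∏ k ∈ Finset.Ico m M, (1 + PowerSeries.X ^ (2 * k + 1))) *
        ∏ k ∈ Finset.range M, (1 - PowerSeries.X ^ (2 * k + 2))⁻¹ := by
    rw [hsplit, pochFin_even, prod_inv (fun i _ => constantCoeff_one_sub_X_pow (by omega))]
    have hc : pochFin (-1) 1 2 m * (pochFin (-1) 1 2 m)⁻¹ = 1 :=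
      PowerSeries.mul_inv_cancel _ (by rw [constantCoeff_pochFin (-1) (by omega)]; exact one_ne_zero)
    calc pochFin (-1) 1 2 m * (∏ k ∈ Finset.Ico m M, (1 + PowerSeries.X ^ (2 * k + 1))) *
          (∏ k ∈ Finset.range M, (1 - PowerSeries.X ^ (2 * k + 2))⁻¹) * (pochFin (-1) 1 2 m)⁻¹
        = (pochFin (-1) 1 2 m * (pochFin (-1) 1 2 m)⁻¹) *
            ((∏ k ∈ Finset.Ico m M, (1 + PowerSeries.X ^ (2 * k + 1))) *
              ∏ k ∈ Finset.range M, (1 - PowerSeries.X ^ (2 * k + 2))⁻¹) := by ring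
      _ = _ := by rw [hc, one_mul]
  rw [hGG]
  -- express as a product of `Fct` over a finset of exponents
  have hoddF : ∀ k : ℕ, Fct (2 * k + 1) = 1 + PowerSeries.X ^ (2 * k + 1) := fun k => by
    rw [Fct, if_pos ⟨k, by omega⟩]
  have hevenF : ∀ k : ℕ, Fct (2 * k + 2) = (1 - PowerSeries.X ^ (2 * k + 2))⁻¹ := fun k => by
    rw [Fct, if_neg]; intro ⟨r, hr⟩; omega
  have hQ : (∏ k ∈ Finset.Ico m M, (1 + PowerSeries.X ^ (2 * k + 1))) =
      ∏ i ∈ (Finset.Ico m M).image (fun k => 2 * k + 1), Fct i := by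
    rw [Finset.prod_image (fun a _ b _ h => by omega)]
    exact (Finset.prod_congr rfl fun k _ => (hoddF k)).symm
  have hE : (∏ k ∈ Finset.range M, (1 - PowerSeries.X ^ (2 * k + 2))⁻¹) =
      ∏ i ∈ (Finset.range M).image (fun k => 2 * k + 2), Fct i := by
    rw [Finset.prod_image (fun a _ b _ h => by omega)]
    exact (Finset.prod_congr rfl fun k _ => (hevenF k)).symm
  set U := ((Finset.Ico m M).image (fun k => 2 * k + 1)) ∪
      ((Finset.range M).image (fun k => 2 * k + 2)) with hU
  have hdisj : Disjoint ((Finset.Ico m M).image (fun k => 2 * k + 1))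
      ((Finset.range M).image (fun k => 2 * k + 2)) := by
    rw [Finset.disjoint_left]
    rintro a ha hb
    simp only [Finset.mem_image, Finset.mem_Ico, Finset.mem_range] at ha hb
    obtain ⟨x, _, hx⟩ := ha
    obtain ⟨y, _, hy⟩ := hb
    omega
  have hprodU : (∏ k ∈ Finset.Ico m M, (1 + PowerSeries.X ^ (2 * k + 1))) *
      (∏ k ∈ Finset.range M, (1 - PowerSeries.X ^ (2 * k + 2))⁻¹) = ∏ i ∈ U, Fct i := by
    rw [hQ, hE, hU, Finset.prod_union hdisj]
  rw [hprodU]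
  -- restrict to small exponents
  set s := (Finset.range (N + 1)).filter (fun i => 0 < i ∧ (Odd i → 2 * m + 1 ≤ i)) with hs
  have hsub : s ⊆ U := by
    intro i hi
    rw [hs, Finset.mem_filter, Finset.mem_range] at hi
    obtain ⟨hiN, hipos, hiodd⟩ := hi
    rw [hU, Finset.mem_union]
    rcases Nat.even_or_odd i with he | ho
    · right
      obtain ⟨r, hr⟩ := he
      refine Finset.mem_image.2 ⟨r - 1, Finset.mem_range.2 (by omega), by omega⟩
    · left
      obtain ⟨k, hk⟩ := ho
      have hmk : 2 * m + 1 ≤ i := hiodd ⟨k, hk⟩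
      refine Finset.mem_image.2 ⟨k, Finset.mem_Ico.2 ⟨by omega, by omega⟩, by omega⟩
  have hout : ∀ i ∈ U, i ∉ s → Agr N (Fct i) 1 := by
    intro i hiU his
    have hprop : 0 < i ∧ (Odd i → 2 * m + 1 ≤ i) := by
      rw [hU, Finset.mem_union] at hiU
      rcases hiU with h | h <;> obtain ⟨x, hx, rfl⟩ := Finset.mem_image.1 h
      · exact ⟨by omega, fun _ => by rw [Finset.mem_Ico] at hx; omega⟩
      · exact ⟨by omega, fun ⟨r, hr⟩ => by omega⟩
    have : ¬ i < N + 1 := fun hlt =>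
      his (by rw [hs, Finset.mem_filter, Finset.mem_range]; exact ⟨hlt, hprop⟩)
    exact Fct_agr_one (by omega)
  rw [coeff_prod_subset hsub hout]
  -- identify with the indicator-series product
  have hind : ∀ i ∈ s, Fct i = indicatorSeries ℚ ((· * i) '' cOd i) := by
    intro i hi
    rw [hs, Finset.mem_filter, Finset.mem_range] at hi
    obtain ⟨hiN, hipos, -⟩ := hi
    obtain ⟨j, rfl⟩ : ∃ j, i = j + 1 := ⟨i - 1, by omega⟩
    rw [Fct]
    simp only [cOd]
    split_ifs with h
    · rw [show ((· * (j + 1)) '' {0, 1} : Set ℕ) = {0, j + 1} by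
        rw [Set.image_pair]; simp]
      exact two_series j
    · rw [show ((· * (j + 1)) '' Set.univ : Set ℕ) = {k | j + 1 ∣ k} by
        ext k
        simp only [Set.image_univ, Set.mem_range, Set.mem_setOf_eq]
        constructor
        · rintro ⟨x, rfl⟩; exact Dvd.intro_left x rfl
        · rintro ⟨x, rfl⟩; exact ⟨x, mul_comm _ _⟩]
      exact num_series' j
  rw [Finset.prod_congr rfl hind]
  have hcount := partialGF_prop ℚ N s
    (fun i hi => by rw [hs, Finset.mem_filter] at hi; exact hi.2.1) cOd
    (fun i _ => by simp only [cOd]; split_ifs <;> simp)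
  rw [← hcount]
  congr 2
  apply Finset.filter_congr
  intro p _
  have hple : ∀ j ∈ p.parts, j ≤ N := fun j hj => by
    have := Multiset.single_le_sum (fun x _ => Nat.zero_le x) j hj
    rwa [p.parts_sum] at this
  constructor
  · rintro ⟨hcnt, hmem⟩
    constructor
    · intro j hodd
      have h5 := hcnt j
      simp only [cOd, if_pos hodd, Set.mem_insert_iff, Set.mem_singleton_iff] at h5
      omega
    · intro j hj hodd
      have h5 := hmem j hj
      rw [hs, Finset.mem_filter] at h5
      exact h5.2.2 hodd
  · rintro ⟨hcnt, hbig⟩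
    constructor
    · intro j
      simp only [cOd]
      split_ifs with hodd
      · have := hcnt j hodd
        simp only [Set.mem_insert_iff, Set.mem_singleton_iff]
        omega
      · trivial
    · intro j hj
      rw [hs, Finset.mem_filter, Finset.mem_range]
      exact ⟨by have := hple j hj; omega, p.parts_pos hj, hbig j hj⟩

/-- `σ_od moex(n)`: sum of moex over partitions of `n` with distinct odd parts -/
def sigmaOdMoex (n : ℕ) : ℕ :=
  ∑ l ∈ Finset.univ.filter (fun l : n.Partition => OddDistinct l), pmoex l

lemma part_le {n : ℕ} (p : n.Partition) {j : ℕ} (hj : j ∈ p.parts) : j ≤ n := by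
  have := Multiset.single_le_sum (fun x (_ : x ∈ p.parts) => Nat.zero_le x) j hj
  rwa [p.parts_sum] at this

/-- the multiset `{1, 3, ..., 2m-1}` -/
def stair (m : ℕ) : Multiset ℕ := (Multiset.range m).map fun j => 2 * j + 1

lemma stair_sum (m : ℕ) : (stair m).sum = m * m := by
  induction m with
  | zero => simp [stair]
  | succ m ih =>
    rw [stair, Multiset.range_succ, Multiset.map_cons, Multiset.sum_cons, ← stair, ih]
    ring

lemma stair_count (m i : ℕ) :
    (stair m).count i = if ∃ j < m, i = 2 * j + 1 then 1 else 0 := by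
  split_ifs with h
  · obtain ⟨j, hj, rfl⟩ := h
    have hinj : Function.Injective (fun j : ℕ => 2 * j + 1) := fun a b hab => by simp only at hab; omega
    have h1 := Multiset.count_map_eq_count' _ (Multiset.range m) hinj j
    rw [stair, h1, Multiset.count_eq_one_of_mem (Multiset.nodup_range m) (Multiset.mem_range.2 hj)]
  · rw [Multiset.count_eq_zero]
    intro hmem
    rw [stair, Multiset.mem_map] at hmem
    obtain ⟨j, hj, hji⟩ := hmem
    rw [Multiset.mem_range] at hj
    exact h ⟨j, hj, hji.symm⟩

lemma stair_le {n m : ℕ} (p : n.Partition) (hdist : OddDistinct p)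
    (hall : ∀ j < m, 2 * j + 1 ∈ p.parts) : stair m ≤ p.parts := by
  rw [Multiset.le_iff_count]
  intro i
  rw [stair_count]
  split_ifs with h
  · obtain ⟨j, hj, rfl⟩ := h
    exact Multiset.one_le_count_iff_mem.2 (hall j hj)
  · omega

/-- counting partitions with odd parts distinct and all odd parts `≥ 2m+1` -/
def cQ (m N : ℕ) : ℕ :=
  (Finset.univ.filter fun p : N.Partition =>
    (∀ j, Odd j → p.parts.count j ≤ 1) ∧ ∀ j ∈ p.parts, Odd j → 2 * m + 1 ≤ j).card

/-- counting odd-distinct partitions of `n` containing `1, 3, ..., 2m-1` -/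
def cN (m n : ℕ) : ℕ :=
  (Finset.univ.filter fun p : n.Partition =>
    OddDistinct p ∧ ∀ j < m, 2 * j + 1 ∈ p.parts).card

lemma cN_eq_zero {m n : ℕ} (h : n < m * m) : cN m n = 0 := by
  rw [cN, Finset.card_eq_zero, Finset.eq_empty_iff_forall_notMem]
  intro p hp
  rw [Finset.mem_filter] at hp
  obtain ⟨-, hdist, hall⟩ := hp
  obtain ⟨u, hu⟩ := Multiset.le_iff_exists_add.1 (stair_le p hdist hall)
  have := congrArg Multiset.sum hu
  rw [Multiset.sum_add, stair_sum, p.parts_sum] at this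
  omega

lemma cN_eq_cQ {m n : ℕ} (h : m * m ≤ n) : cN m n = cQ m (n - m * m) := by
  rw [cN, cQ]
  refine Finset.card_bij'
    (fun p hp => ⟨p.parts - stair m, ?_, ?_⟩)
    (fun q hq => ⟨q.parts + stair m, ?_, ?_⟩) ?_ ?_ ?_ ?_
  · intro i hi
    exact p.parts_pos (Multiset.mem_of_le (tsub_le_self) hi)
  · rw [Finset.mem_filter] at hp
    obtain ⟨-, hdist, hall⟩ := hp
    have hle := stair_le p hdist hall
    have := congrArg Multiset.sum (tsub_add_cancel_of_le hle)
    rw [Multiset.sum_add, stair_sum, p.parts_sum] at this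
    omega
  · intro i hi
    rw [Multiset.mem_add] at hi
    rcases hi with hi | hi
    · exact q.parts_pos hi
    · rw [stair, Multiset.mem_map] at hi
      obtain ⟨j, -, rfl⟩ := hi
      omega
  · rw [Multiset.sum_add, stair_sum, q.parts_sum]
    omega
  -- forward map lands in target filter
  · intro p hp
    rw [Finset.mem_filter] at hp ⊢
    obtain ⟨-, hdist, hall⟩ := hp
    have hle := stair_le p hdist hall
    refine ⟨Finset.mem_univ _, fun j hodd => ?_, fun j hj hodd => ?_⟩
    · simp only [Multiset.count_sub]
      exact le_trans (Nat.sub_le _ _) (hdist j hodd)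
    · by_contra hlt
      obtain ⟨i, rfl⟩ := hodd
      have him : i < m := by omega
      have h1 : p.parts.count (2 * i + 1) = 1 := by
        have := hdist (2 * i + 1) ⟨i, by omega⟩
        have := Multiset.one_le_count_iff_mem.2 (hall i him)
        omega
      have h2 : (stair m).count (2 * i + 1) = 1 := by
        rw [stair_count, if_pos ⟨i, him, rfl⟩]
      have h3 := Multiset.count_pos.2 hj
      simp only [Multiset.count_sub, h1, h2] at h3
      omega
  -- backward map lands in source filter
  · intro q hq
    rw [Finset.mem_filter] at hq ⊢
    obtain ⟨-, hdist, hbig⟩ := hq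
    refine ⟨Finset.mem_univ _, fun i hodd => ?_, fun j hjm => ?_⟩
    · show (q.parts + stair m).count i ≤ 1
      rw [Multiset.count_add, stair_count]
      split_ifs with hcase
      · obtain ⟨j, hj, rfl⟩ := hcase
        have hq0 : q.parts.count (2 * j + 1) = 0 := by
          rw [Multiset.count_eq_zero]
          intro hmem
          have := hbig _ hmem ⟨j, by omega⟩
          omega
        omega
      · have := hdist i hodd
        omega
    · show 2 * j + 1 ∈ q.parts + stair m
      rw [Multiset.mem_add, stair, Multiset.mem_map]
      exact Or.inr ⟨j, Multiset.mem_range.2 hjm, rfl⟩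
  · intro p hp
    rw [Finset.mem_filter] at hp
    obtain ⟨-, hdist, hall⟩ := hp
    apply Nat.Partition.ext
    exact tsub_add_cancel_of_le (stair_le p hdist hall)
  · intro q hq
    apply Nat.Partition.ext
    simp

lemma Agr.add {n : ℕ} {f f' g g' : PowerSeries ℚ} (hf : Agr n f f') (hg : Agr n g g') :
    Agr n (f + g) (f' + g') := fun j hj => by
  rw [map_add, map_add, hf j hj, hg j hj]

lemma pmoex_eq {n : ℕ} (p : n.Partition) :
    pmoex p = 1 + 2 * ((Finset.range (n + 1)).filter fun k => ∀ j ≤ k, 2 * j + 1 ∈ p.parts).card := by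
  have hex : ∃ k, 2 * k + 1 ∉ p.parts := ⟨n, fun hmem => by have := part_le p hmem; omega⟩
  have hspec : 2 * Nat.find hex + 1 ∉ p.parts := Nat.find_spec hex
  have hmin : ∀ j < Nat.find hex, 2 * j + 1 ∈ p.parts := fun j hj => by
    have := Nat.find_min hex hj
    rwa [not_not] at this
  have hc0n : Nat.find hex ≤ n := Nat.find_le (fun hmem => by have := part_le p hmem; omega)
  have hfilter : (Finset.range (n + 1)).filter (fun k => ∀ j ≤ k, 2 * j + 1 ∈ p.parts) =
      Finset.range (Nat.find hex) := by
    ext k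
    simp only [Finset.mem_filter, Finset.mem_range]
    constructor
    · rintro ⟨hkn, hall⟩
      by_contra hge
      exact hspec (hall (Nat.find hex) (by omega))
    · intro hk
      exact ⟨by omega, fun j hj => hmin j (by omega)⟩
  rw [hfilter, Finset.card_range]
  have hval : sInf {k : ℕ | Odd k ∧ k ∉ p.parts} = 2 * Nat.find hex + 1 := by
    apply le_antisymm
    · exact Nat.sInf_le ⟨⟨Nat.find hex, by omega⟩, hspec⟩
    · refine le_csInf ⟨2 * Nat.find hex + 1, ⟨Nat.find hex, by omega⟩, hspec⟩ ?_
      rintro x ⟨⟨i, hi⟩, hx⟩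
      have h2 : 2 * i + 1 ∉ p.parts := by
        rw [show 2 * i + 1 = x from by omega]; exact hx
      have := Nat.find_min' hex h2
      omega
  rw [pmoex, hval]
  omega

lemma sigmaOdMoex_eq (n : ℕ) :
    sigmaOdMoex n = cN 0 n + 2 * ∑ k ∈ Finset.range (n + 1), cN (k + 1) n := by
  have hc0 : cN 0 n = (Finset.univ.filter fun p : n.Partition => OddDistinct p).card := by
    rw [cN]
    congr 1
    apply Finset.filter_congr
    intro p _
    simp
  rw [sigmaOdMoex]
  rw [Finset.sum_congr rfl fun p _ => pmoex_eq p]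
  rw [Finset.sum_add_distrib, Finset.sum_const, smul_eq_mul, mul_one, ← Finset.mul_sum, hc0]
  congr 1
  congr 1
  calc ∑ p ∈ Finset.univ.filter (fun p : n.Partition => OddDistinct p),
        ((Finset.range (n + 1)).filter fun k => ∀ j ≤ k, 2 * j + 1 ∈ p.parts).card
      = ∑ p ∈ Finset.univ.filter (fun p : n.Partition => OddDistinct p),
          ∑ k ∈ Finset.range (n + 1), if ∀ j ≤ k, 2 * j + 1 ∈ p.parts then 1 else 0 :=
        Finset.sum_congr rfl fun p _ => Finset.card_filter _ _
    _ = ∑ k ∈ Finset.range (n + 1),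
          ∑ p ∈ Finset.univ.filter (fun p : n.Partition => OddDistinct p),
            if ∀ j ≤ k, 2 * j + 1 ∈ p.parts then 1 else 0 := Finset.sum_comm
    _ = ∑ k ∈ Finset.range (n + 1), cN (k + 1) n := by
        refine Finset.sum_congr rfl fun k _ => ?_
        rw [← Finset.card_filter, Finset.filter_filter, cN]
        congr 1
        apply Finset.filter_congr
        intro p _
        simp only [Nat.lt_succ_iff]

lemma coeff_G' (m N : ℕ) :
    coeff N (pochInf (-1) 1 2 * (pochInf 1 2 2)⁻¹ * (pochFin (-1) 1 2 m)⁻¹) = (cQ m N : ℚ) :=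
  coeff_G m N

theorem stmt_6 :
    (∑' n : ℕ, PowerSeries.C (sigmaOdMoex n : ℚ) * PowerSeries.X ^ n) =
      pochInf (-1) 1 2 * (pochInf 1 2 2)⁻¹ *
        (1 + 2 * ∑' n : ℕ, PowerSeries.X ^ ((n + 1) ^ 2) * (pochFin (-1) 1 2 (n + 1))⁻¹) := by
  refine PowerSeries.ext fun n => ?_
  have hlowL : ∀ k j, j < k →
      coeff j (PowerSeries.C (sigmaOdMoex k : ℚ) * PowerSeries.X ^ k) = 0 := by
    intro k j hj
    rw [coeff_C_mul, coeff_X_pow, if_neg (by omega), mul_zero]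
  have hL : coeff n (∑' k : ℕ, PowerSeries.C (sigmaOdMoex k : ℚ) * PowerSeries.X ^ k)
      = (sigmaOdMoex n : ℚ) := by
    rw [tsum_low_agr _ hlowL n n le_rfl, map_sum]
    rw [Finset.sum_eq_single n]
    · rw [coeff_C_mul, coeff_X_pow, if_pos rfl, mul_one]
    · intro k _ hk
      rw [coeff_C_mul, coeff_X_pow, if_neg fun h => hk h.symm, mul_zero]
    · intro h; exact absurd (Finset.self_mem_range_succ n) h
  rw [hL]
  have hlowS : ∀ k j, j < k →
      coeff j ((PowerSeries.X : PowerSeries ℚ) ^ ((k + 1) ^ 2) *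
        (pochFin (-1) 1 2 (k + 1))⁻¹) = 0 := by
    intro k j hj
    have hk : k + 1 ≤ (k + 1) ^ 2 := Nat.le_self_pow (by omega) _
    rw [mul_comm, coeff_mul_X_pow', if_neg (by omega)]
  have hSagr := tsum_low_agr _ hlowS n
  have hRHS := ((Agr.refl n (pochInf (-1) 1 2 * (pochInf 1 2 2)⁻¹)).mul
    ((Agr.refl n 1).add ((Agr.refl n 2).mul hSagr))) n le_rfl
  rw [hRHS]
  have hexpand : pochInf (-1) 1 2 * (pochInf 1 2 2)⁻¹ *
      (1 + 2 * ∑ k ∈ Finset.range (n + 1),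
        (PowerSeries.X : PowerSeries ℚ) ^ ((k + 1) ^ 2) * (pochFin (-1) 1 2 (k + 1))⁻¹) =
      pochInf (-1) 1 2 * (pochInf 1 2 2)⁻¹ +
        PowerSeries.C 2 * ∑ k ∈ Finset.range (n + 1),
          (pochInf (-1) 1 2 * (pochInf 1 2 2)⁻¹ * (pochFin (-1) 1 2 (k + 1))⁻¹ *
            PowerSeries.X ^ ((k + 1) ^ 2)) := by
    rw [show (PowerSeries.C (2:ℚ)) = (2 : PowerSeries ℚ) from map_ofNat _ 2, mul_add, mul_one,
      Finset.mul_sum, Finset.mul_sum, Finset.mul_sum]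
    congr 1
    refine Finset.sum_congr rfl fun k _ => by ring
  rw [hexpand, map_add, coeff_C_mul, map_sum]
  have hT : coeff n (pochInf (-1) 1 2 * (pochInf 1 2 2)⁻¹) = (cQ 0 n : ℚ) := by
    have h0 : pochFin (-1) 1 2 0 = 1 := by simp [pochFin]
    have := coeff_G' 0 n
    rwa [h0, inv_one, mul_one] at this
  have hterm : ∀ k, coeff n (pochInf (-1) 1 2 * (pochInf 1 2 2)⁻¹ *
      (pochFin (-1) 1 2 (k + 1))⁻¹ * PowerSeries.X ^ ((k + 1) ^ 2)) =
      ((if (k + 1) ^ 2 ≤ n then cQ (k + 1) (n - (k + 1) ^ 2) else 0 : ℕ) : ℚ) := by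
    intro k
    rw [coeff_mul_X_pow']
    split_ifs with hc
    · exact coeff_G' (k + 1) (n - (k + 1) ^ 2)
    · simp
  rw [Finset.sum_congr rfl fun k _ => hterm k, hT]
  have hnat : sigmaOdMoex n = cQ 0 n + 2 * ∑ k ∈ Finset.range (n + 1),
      (if (k + 1) ^ 2 ≤ n then cQ (k + 1) (n - (k + 1) ^ 2) else 0) := by
    rw [sigmaOdMoex_eq]
    have h0 : cN 0 n = cQ 0 n := by
      have := cN_eq_cQ (m := 0) (n := n) (by omega)
      simpa using this
    rw [h0]
    congr 2
    refine Finset.sum_congr rfl fun k _ => ?_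
    rw [show (k + 1) ^ 2 = (k + 1) * (k + 1) from sq (k + 1)]
    split_ifs with hc
    · exact cN_eq_cQ hc
    · exact cN_eq_zero (by omega)
  rw [hnat]
  push_cast
  ring

end
end

section
/- For every integer n ≥ 4, σ_od moex(n+1) > σ_od moex(n). -/
open Finset
open scoped Classical

noncomputable section

section helpers

lemma erase_sum {n : ℕ} (l : n.Partition) {a : ℕ} (h : a ∈ l.parts) :
    a + (l.parts.erase a).sum = n := by
  have := congrArg Multiset.sum (Multiset.cons_erase h)
  rwa [Multiset.sum_cons, l.parts_sum] at this

lemma sup_mem_of_ne_zero {s : Multiset ℕ} (h : s ≠ 0) : s.sup ∈ s := by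
  induction s using Multiset.induction_on with
  | empty => exact absurd rfl h
  | cons a t ih =>
    rw [Multiset.sup_cons]
    rcases eq_or_ne t 0 with rfl | ht
    · simp
    · rcases le_total a t.sup with h1 | h1
      · rw [sup_eq_right.mpr h1]; exact Multiset.mem_cons_of_mem (ih ht)
      · rw [sup_eq_left.mpr h1]; exact Multiset.mem_cons_self a t

lemma pmoex_set_nonempty {n : ℕ} (l : n.Partition) :
    {k : ℕ | Odd k ∧ k ∉ l.parts}.Nonempty := by
  refine ⟨2*n+1, ⟨⟨n, rfl⟩, fun hm => ?_⟩⟩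
  have := Multiset.single_le_sum (fun x _ => Nat.zero_le x) _ hm
  rw [l.parts_sum] at this
  omega

lemma pmoex_odd {n : ℕ} (l : n.Partition) : Odd (pmoex l) :=
  (Nat.sInf_mem (pmoex_set_nonempty l)).1

lemma pmoex_notMem {n : ℕ} (l : n.Partition) : pmoex l ∉ l.parts :=
  (Nat.sInf_mem (pmoex_set_nonempty l)).2

lemma pmoex_pos {n : ℕ} (l : n.Partition) : 1 ≤ pmoex l :=
  (pmoex_odd l).pos

lemma mem_of_lt_pmoex {n : ℕ} {l : n.Partition} {j : ℕ} (hj : j < pmoex l) (hodd : Odd j) :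
    j ∈ l.parts := by
  have := Nat.notMem_of_lt_sInf (s := {k : ℕ | Odd k ∧ k ∉ l.parts}) hj
  simp only [Set.mem_setOf_eq, not_and, not_not] at this
  exact this hodd

lemma le_pmoex_of {n : ℕ} {l : n.Partition} {i : ℕ}
    (h : ∀ j, j < i → Odd j → j ∈ l.parts) : i ≤ pmoex l := by
  by_contra hc
  push_neg at hc
  exact pmoex_notMem l (h _ hc (pmoex_odd l))

lemma pmoex_eq_one {n : ℕ} {l : n.Partition} (h : (1:ℕ) ∉ l.parts) : pmoex l = 1 := by
  have h1 : pmoex l ≤ 1 := Nat.sInf_le ⟨odd_one, h⟩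
  have h2 := pmoex_pos l
  omega

/-- if the largest part is `1` then `n ≤ 1` (for odd-distinct partitions) -/
lemma small_of_sup_eq_one {n : ℕ} {l : n.Partition} (hd : OddDistinct l)
    (h : l.parts.sup ≤ 1) : n ≤ 1 := by
  have hall : ∀ b ∈ l.parts, b = 1 := fun b hb =>
    le_antisymm (le_trans (Multiset.le_sup hb) h) (l.parts_pos hb)
  have hcard : l.parts.count 1 = Multiset.card l.parts := Multiset.count_eq_card.mpr (fun b hb => (hall b hb).symm)
  have h1 := hd 1 odd_one
  have hsum : l.parts.sum ≤ Multiset.card l.parts * 1 := by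
    calc l.parts.sum ≤ Multiset.card l.parts • (1:ℕ) :=
          Multiset.sum_le_card_nsmul _ _ (fun x hx => by rw [hall x hx])
      _ = Multiset.card l.parts * 1 := by simp
  rw [l.parts_sum] at hsum
  omega

end helpers

def Fm {n : ℕ} (p : Σ _ : n.Partition, ℕ) : Σ _ : (n+1).Partition, ℕ :=
  if h1 : (1:ℕ) ∈ p.1.parts then
    (if h2 : p.2 = 1 then
      ⟨⟨2 ::ₘ p.1.parts.erase 1,
        by
          intro i hi
          rcases Multiset.mem_cons.mp hi with rfl | hi
          · omega
          · exact p.1.parts_pos (Multiset.mem_of_mem_erase hi),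
        by
          have hs := erase_sum p.1 h1
          rw [Multiset.sum_cons]; omega⟩, 1⟩
    else if h3 : Odd p.1.parts.sup ∧ p.1.parts.sup < p.2 ∧ 3 ≤ p.1.parts.sup then
      ⟨⟨2 ::ₘ (p.1.parts.sup - 1) ::ₘ p.1.parts.erase p.1.parts.sup,
        by
          intro i hi
          rcases Multiset.mem_cons.mp hi with rfl | hi
          · omega
          rcases Multiset.mem_cons.mp hi with rfl | hi
          · omega
          · exact p.1.parts_pos (Multiset.mem_of_mem_erase hi),
        by
          have hL : p.1.parts.sup ∈ p.1.parts :=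
            sup_mem_of_ne_zero (fun h0 => by rw [h0] at h1; simp at h1)
          have hs := erase_sum p.1 hL
          rw [Multiset.sum_cons, Multiset.sum_cons]
          omega⟩, p.2 - p.1.parts.sup + 1⟩
    else
      ⟨⟨(p.1.parts.sup + 1) ::ₘ p.1.parts.erase p.1.parts.sup,
        by
          intro i hi
          rcases Multiset.mem_cons.mp hi with rfl | hi
          · omega
          · exact p.1.parts_pos (Multiset.mem_of_mem_erase hi),
        by
          have hL : p.1.parts.sup ∈ p.1.parts :=
            sup_mem_of_ne_zero (fun h0 => by rw [h0] at h1; simp at h1)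
          have hs := erase_sum p.1 hL
          rw [Multiset.sum_cons]
          omega⟩, p.2⟩)
  else
    ⟨⟨1 ::ₘ p.1.parts,
      by
        intro i hi
        rcases Multiset.mem_cons.mp hi with rfl | hi
        · omega
        · exact p.1.parts_pos hi,
      by rw [Multiset.sum_cons, p.1.parts_sum]; omega⟩, 1⟩

lemma Fm_case1 {n : ℕ} (p : Σ _ : n.Partition, ℕ) (h1 : (1:ℕ) ∉ p.1.parts) :
    (Fm p).1.parts = 1 ::ₘ p.1.parts ∧ (Fm p).2 = 1 := by
  rw [Fm, dif_neg h1]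
  exact ⟨rfl, rfl⟩

lemma Fm_case2 {n : ℕ} (p : Σ _ : n.Partition, ℕ) (h1 : (1:ℕ) ∈ p.1.parts)
    (h2 : p.2 = 1) :
    (Fm p).1.parts = 2 ::ₘ p.1.parts.erase 1 ∧ (Fm p).2 = 1 := by
  rw [Fm, dif_pos h1, dif_pos h2]
  exact ⟨rfl, rfl⟩

lemma Fm_case4 {n : ℕ} (p : Σ _ : n.Partition, ℕ) (h1 : (1:ℕ) ∈ p.1.parts)
    (h2 : p.2 ≠ 1)
    (h3 : Odd p.1.parts.sup ∧ p.1.parts.sup < p.2 ∧ 3 ≤ p.1.parts.sup) :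
    (Fm p).1.parts = 2 ::ₘ (p.1.parts.sup - 1) ::ₘ p.1.parts.erase p.1.parts.sup ∧
      (Fm p).2 = p.2 - p.1.parts.sup + 1 := by
  rw [Fm, dif_pos h1, dif_neg h2, dif_pos h3]
  exact ⟨rfl, rfl⟩

lemma Fm_case3 {n : ℕ} (p : Σ _ : n.Partition, ℕ) (h1 : (1:ℕ) ∈ p.1.parts)
    (h2 : p.2 ≠ 1)
    (h3 : ¬(Odd p.1.parts.sup ∧ p.1.parts.sup < p.2 ∧ 3 ≤ p.1.parts.sup)) :
    (Fm p).1.parts = (p.1.parts.sup + 1) ::ₘ p.1.parts.erase p.1.parts.sup ∧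
      (Fm p).2 = p.2 := by
  rw [Fm, dif_pos h1, dif_neg h2, dif_neg h3]
  exact ⟨rfl, rfl⟩

def TT (n : ℕ) : Finset (Σ _ : n.Partition, ℕ) :=
  (Finset.univ.filter (fun l : n.Partition => OddDistinct l)).sigma
    (fun l => Finset.Icc 1 (pmoex l))

lemma mem_TT {n : ℕ} {p : Σ _ : n.Partition, ℕ} :
    p ∈ TT n ↔ OddDistinct p.1 ∧ 1 ≤ p.2 ∧ p.2 ≤ pmoex p.1 := by
  simp [TT, Finset.mem_sigma, Finset.mem_filter, Finset.mem_Icc, and_assoc]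

lemma card_TT (n : ℕ) : (TT n).card = sigmaOdMoex n := by
  rw [TT, Finset.card_sigma, sigmaOdMoex]
  refine Finset.sum_congr rfl (fun l _ => ?_)
  rw [Nat.card_Icc]
  omega

/-- parts of `p` below `p.2` that are odd are parts -/
lemma parts_of_mem_TT {n : ℕ} {p : Σ _ : n.Partition, ℕ} (hp : p ∈ TT n)
    {j : ℕ} (hj : j < p.2) (hodd : Odd j) : j ∈ p.1.parts :=
  mem_of_lt_pmoex (lt_of_lt_of_le hj (mem_TT.mp hp).2.2) hodd

lemma count_erase_le {s : Multiset ℕ} {a k : ℕ} :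
    (s.erase a).count k ≤ s.count k :=
  Multiset.count_le_of_le k (Multiset.erase_le a s)

lemma odd_lt_three {j : ℕ} (h : j < 3) (ho : Odd j) : j = 1 := by
  rw [Nat.odd_iff] at ho; omega

set_option maxHeartbeats 1600000 in
lemma Fm_mapsTo {n : ℕ} (hn : 4 ≤ n) {p : Σ _ : n.Partition, ℕ} (hp : p ∈ TT n) :
    Fm p ∈ TT (n + 1) := by
  obtain ⟨hd, hi1, hile⟩ := mem_TT.mp hp
  by_cases h1 : (1:ℕ) ∈ p.1.parts
  · by_cases h2 : p.2 = 1
    · -- case 2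
      obtain ⟨hparts, hsnd⟩ := Fm_case2 p h1 h2
      refine mem_TT.mpr ⟨?_, ?_, ?_⟩
      · intro k hk
        rw [hparts, Multiset.count_cons]
        have hk2 : k ≠ 2 := by rw [Nat.odd_iff] at hk; omega
        simp only [if_neg hk2, add_zero]
        exact le_trans count_erase_le (hd k hk)
      · rw [hsnd]
      · rw [hsnd]; exact pmoex_pos _
    · have hLmem : p.1.parts.sup ∈ p.1.parts :=
        sup_mem_of_ne_zero (fun h0 => by rw [h0] at h1; simp at h1)
      by_cases h3 : Odd p.1.parts.sup ∧ p.1.parts.sup < p.2 ∧ 3 ≤ p.1.parts.sup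
      · -- case 4
        obtain ⟨hparts, hsnd⟩ := Fm_case4 p h1 h2 h3
        obtain ⟨hLodd, hLlt, hL3⟩ := h3
        set L := p.1.parts.sup with hLdef
        -- p.2 ≤ L + 2
        have hisle : p.2 ≤ L + 2 := by
          by_contra hcon
          push_neg at hcon
          have hj : L + 2 ∈ p.1.parts := by
            refine parts_of_mem_TT hp (by omega) ?_
            rw [Nat.odd_iff] at hLodd ⊢; omega
          have := Multiset.le_sup hj
          omega
        refine mem_TT.mpr ⟨?_, ?_, ?_⟩
        · intro k hk
          rw [hparts, Multiset.count_cons, Multiset.count_cons]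
          have hk2 : k ≠ 2 := by rw [Nat.odd_iff] at hk; omega
          have hkL1 : k ≠ L - 1 := by rw [Nat.odd_iff] at hk hLodd; omega
          simp only [if_neg hk2, if_neg hkL1, add_zero]
          exact le_trans count_erase_le (hd k hk)
        · rw [hsnd]; omega
        · rw [hsnd]
          refine le_pmoex_of (fun j hj hodd => ?_)
          have hj1 : j = 1 := odd_lt_three (by omega) hodd
          rw [hparts, hj1]
          refine Multiset.mem_cons_of_mem (Multiset.mem_cons_of_mem ?_)
          exact (Multiset.mem_erase_of_ne (by omega)).mpr h1
      · -- case 3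
        obtain ⟨hparts, hsnd⟩ := Fm_case3 p h1 h2 h3
        set L := p.1.parts.sup with hLdef
        have hnotbad : ¬(Odd L ∧ L < p.2) := by
          rintro ⟨hLodd, hLlt⟩
          refine h3 ⟨hLodd, hLlt, ?_⟩
          by_contra hcon
          push_neg at hcon
          have hL1 : L = 1 := by rw [Nat.odd_iff] at hLodd; omega
          have := small_of_sup_eq_one hd (le_of_eq hL1)
          omega
        refine mem_TT.mpr ⟨?_, ?_, ?_⟩
        · intro k hk
          rw [hparts, Multiset.count_cons]
          by_cases hkL : k = L + 1
          · have hnot : L + 1 ∉ p.1.parts := fun hmem => by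
              have := Multiset.le_sup hmem; omega
            have : (p.1.parts.erase L).count (L+1) = 0 := by
              rw [Multiset.count_erase_of_ne (by omega)]
              exact Multiset.count_eq_zero.mpr hnot
            rw [hkL, this, if_pos rfl]
          · simp only [if_neg hkL, add_zero]
            exact le_trans count_erase_le (hd k hk)
        · rw [hsnd]; exact hi1
        · rw [hsnd]
          refine le_pmoex_of (fun j hj hodd => ?_)
          have hjs : j ∈ p.1.parts := parts_of_mem_TT hp hj hodd
          have hjL : j ≠ L := by
            intro hEq
            subst hEq
            exact hnotbad ⟨hodd, hj⟩
          rw [hparts]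
          exact Multiset.mem_cons_of_mem ((Multiset.mem_erase_of_ne hjL).mpr hjs)
  · -- case 1
    obtain ⟨hparts, hsnd⟩ := Fm_case1 p h1
    refine mem_TT.mpr ⟨?_, ?_, ?_⟩
    · intro k hk
      rw [hparts, Multiset.count_cons]
      by_cases hk1 : k = 1
      · rw [hk1, if_pos rfl, Multiset.count_eq_zero.mpr h1]
      · simp only [if_neg hk1, add_zero]
        exact hd k hk
    · rw [hsnd]
    · rw [hsnd]; exact pmoex_pos _

lemma sigma_nat_eq {α : Type*} {p q : Σ _ : α, ℕ} (h1 : p.1 = q.1) (h2 : p.2 = q.2) :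
    p = q := by
  cases p; cases q
  cases h1; cases h2
  rfl

section invariants

variable {n : ℕ} {p : Σ _ : n.Partition, ℕ}

lemma memB (h1 : (1:ℕ) ∈ p.1.parts) (hd : OddDistinct p.1) (h2 : p.2 = 1) :
    (1:ℕ) ∉ (Fm p).1.parts := by
  obtain ⟨hparts, _⟩ := Fm_case2 p h1 h2
  rw [hparts]
  intro hmem
  rcases Multiset.mem_cons.mp hmem with h | h
  · omega
  · have : (p.1.parts.erase 1).count 1 = 0 := by
      rw [Multiset.count_erase_self]
      have := hd 1 odd_one
      omega
    rw [← Multiset.count_pos, this] at h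
    omega

lemma sndCD (hp : p ∈ TT n) (h1 : (1:ℕ) ∈ p.1.parts) (h2 : p.2 ≠ 1) :
    2 ≤ (Fm p).2 := by
  have hi1 := (mem_TT.mp hp).2.1
  by_cases h3 : Odd p.1.parts.sup ∧ p.1.parts.sup < p.2 ∧ 3 ≤ p.1.parts.sup
  · rw [(Fm_case4 p h1 h2 h3).2]
    omega
  · rw [(Fm_case3 p h1 h2 h3).2]
    omega

lemma erase_sup_count {s : Multiset ℕ} (hcount : s.count s.sup ≤ 1) {b : ℕ}
    (hb : b ∈ s.erase s.sup) : b ≤ s.sup - 1 := by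
  have hbs : b ∈ s := Multiset.mem_of_mem_erase hb
  have hble : b ≤ s.sup := Multiset.le_sup hbs
  have hbne : b ≠ s.sup := by
    intro hEq
    have h2 : 0 < (s.erase s.sup).count s.sup := Multiset.count_pos.mpr (hEq ▸ hb)
    rw [Multiset.count_erase_self] at h2
    omega
  omega

lemma supC (h1 : (1:ℕ) ∈ p.1.parts) (h2 : p.2 ≠ 1)
    (h3 : ¬(Odd p.1.parts.sup ∧ p.1.parts.sup < p.2 ∧ 3 ≤ p.1.parts.sup)) :
    (Fm p).1.parts.sup = p.1.parts.sup + 1 := by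
  rw [(Fm_case3 p h1 h2 h3).1, Multiset.sup_cons]
  have he : (p.1.parts.erase p.1.parts.sup).sup ≤ p.1.parts.sup :=
    Multiset.sup_le.mpr (fun b hb => Multiset.le_sup (Multiset.mem_of_mem_erase hb))
  exact sup_eq_left.mpr (le_trans he (by omega))

lemma evenC (hd : OddDistinct p.1) (h1 : (1:ℕ) ∈ p.1.parts) (h2 : p.2 ≠ 1)
    (h3 : ¬(Odd p.1.parts.sup ∧ p.1.parts.sup < p.2 ∧ 3 ≤ p.1.parts.sup))
    (heven : Even ((Fm p).1.parts.sup)) :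
    ((Fm p).1.parts.sup - 1) ∉ (Fm p).1.parts := by
  rw [supC h1 h2 h3] at heven ⊢
  set L := p.1.parts.sup with hLdef
  have hLodd : Odd L := by
    rw [Nat.even_iff] at heven; rw [Nat.odd_iff]; omega
  rw [(Fm_case3 p h1 h2 h3).1]
  simp only [Nat.add_sub_cancel]
  intro hmem
  rcases Multiset.mem_cons.mp hmem with h | h
  · omega
  · have hc : (p.1.parts.erase L).count L = 0 := by
      rw [Multiset.count_erase_self]
      have := hd L hLodd
      omega
    rw [← Multiset.count_pos, hc] at h
    omega

lemma supD (hd : OddDistinct p.1) (h1 : (1:ℕ) ∈ p.1.parts) (h2 : p.2 ≠ 1)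
    (h3 : Odd p.1.parts.sup ∧ p.1.parts.sup < p.2 ∧ 3 ≤ p.1.parts.sup) :
    (Fm p).1.parts.sup = p.1.parts.sup - 1 := by
  rw [(Fm_case4 p h1 h2 h3).1, Multiset.sup_cons, Multiset.sup_cons]
  set L := p.1.parts.sup with hLdef
  have hcount : p.1.parts.count L ≤ 1 := hd L h3.1
  have he : (p.1.parts.erase L).sup ≤ L - 1 := by
    rcases eq_or_ne (p.1.parts.erase L) 0 with h0 | h0
    · rw [h0]; simp
    · exact erase_sup_count hcount (sup_mem_of_ne_zero h0)
  have h31 := h3.2.2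
  rw [sup_eq_left.mpr he]
  exact sup_eq_right.mpr (by omega)

lemma evenD (hp : p ∈ TT n) (hd : OddDistinct p.1) (h1 : (1:ℕ) ∈ p.1.parts) (h2 : p.2 ≠ 1)
    (h3 : Odd p.1.parts.sup ∧ p.1.parts.sup < p.2 ∧ 3 ≤ p.1.parts.sup) :
    Even ((Fm p).1.parts.sup) ∧ ((Fm p).1.parts.sup - 1) ∈ (Fm p).1.parts := by
  rw [supD hd h1 h2 h3, (Fm_case4 p h1 h2 h3).1]
  set L := p.1.parts.sup with hLdef
  obtain ⟨hLodd, hLlt, hL3⟩ := h3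
  rw [Nat.odd_iff] at hLodd
  constructor
  · rw [Nat.even_iff]; omega
  · have hmem : L - 2 ∈ p.1.parts := by
      refine parts_of_mem_TT hp (by omega) ?_
      rw [Nat.odd_iff]; omega
    have : L - 1 - 1 = L - 2 := by omega
    rw [this]
    refine Multiset.mem_cons_of_mem (Multiset.mem_cons_of_mem ?_)
    exact (Multiset.mem_erase_of_ne (by omega)).mpr hmem

end invariants

lemma parts_ne_zero {n : ℕ} {p : Σ _ : n.Partition, ℕ} (h1 : (1:ℕ) ∈ p.1.parts) :
    p.1.parts ≠ 0 := fun h0 => by rw [h0] at h1; simp at h1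

set_option maxHeartbeats 3200000 in
lemma Fm_injOn {n : ℕ} {p q : Σ _ : n.Partition, ℕ}
    (hp : p ∈ TT n) (hq : q ∈ TT n) (hEq : Fm p = Fm q) : p = q := by
  have hP : (Fm p).1.parts = (Fm q).1.parts := by rw [hEq]
  have hS : (Fm p).2 = (Fm q).2 := by rw [hEq]
  obtain ⟨hdp, hip1, hiple⟩ := mem_TT.mp hp
  obtain ⟨hdq, hiq1, hiqle⟩ := mem_TT.mp hq
  by_cases h1p : (1:ℕ) ∈ p.1.parts
  · by_cases h2p : p.2 = 1
    · by_cases h1q : (1:ℕ) ∈ q.1.parts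
      · by_cases h2q : q.2 = 1
        · -- B-B
          obtain ⟨hPp, hSp⟩ := Fm_case2 p h1p h2p
          obtain ⟨hPq, hSq⟩ := Fm_case2 q h1q h2q
          rw [hPp, hPq] at hP
          have he := (Multiset.cons_inj_right 2).mp hP
          have hparts : p.1.parts = q.1.parts := by
            rw [← Multiset.cons_erase h1p, ← Multiset.cons_erase h1q, he]
          exact sigma_nat_eq (Nat.Partition.ext hparts) (by rw [h2p, h2q])
        · -- B vs C/D
          have h2 := sndCD hq h1q h2q
          rw [← hS, (Fm_case2 p h1p h2p).2] at h2
          omega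
      · -- B vs A
        have hnot := memB h1p hdp h2p
        have hmem : (1:ℕ) ∈ (Fm q).1.parts := by
          rw [(Fm_case1 q h1q).1]; exact Multiset.mem_cons_self 1 _
        rw [← hP] at hmem
        exact absurd hmem hnot
    · by_cases h1q : (1:ℕ) ∈ q.1.parts
      · by_cases h2q : q.2 = 1
        · -- C/D vs B
          have h2 := sndCD hp h1p h2p
          rw [hS, (Fm_case2 q h1q h2q).2] at h2
          omega
        · by_cases h3p : Odd p.1.parts.sup ∧ p.1.parts.sup < p.2 ∧ 3 ≤ p.1.parts.sup
          · by_cases h3q : Odd q.1.parts.sup ∧ q.1.parts.sup < q.2 ∧ 3 ≤ q.1.parts.sup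
            · -- D-D
              have hsupp := supD hdp h1p h2p h3p
              have hsupq := supD hdq h1q h2q h3q
              have hsup : (Fm p).1.parts.sup = (Fm q).1.parts.sup := by rw [hP]
              have h3p' := h3p.2.2
              have h3q' := h3q.2.2
              have hL : p.1.parts.sup = q.1.parts.sup := by omega
              have hSp := (Fm_case4 p h1p h2p h3p).2
              have hSq := (Fm_case4 q h1q h2q h3q).2
              rw [hSp, hSq] at hS
              have h4p := h3p.2.1
              have h4q := h3q.2.1
              have hsnd : p.2 = q.2 := by omega
              rw [(Fm_case4 p h1p h2p h3p).1, (Fm_case4 q h1q h2q h3q).1, hL] at hP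
              have he := (Multiset.cons_inj_right _).mp ((Multiset.cons_inj_right _).mp hP)
              have hLmp : p.1.parts.sup ∈ p.1.parts := sup_mem_of_ne_zero (parts_ne_zero h1p)
              have hLmq : q.1.parts.sup ∈ q.1.parts := sup_mem_of_ne_zero (parts_ne_zero h1q)
              have hparts : p.1.parts = q.1.parts := by
                rw [← Multiset.cons_erase hLmp, ← Multiset.cons_erase hLmq, hL, he]
              exact sigma_nat_eq (Nat.Partition.ext hparts) hsnd
            · -- D vs C
              have hD := evenD hp hdp h1p h2p h3p
              have hC := evenC hdq h1q h2q h3q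
              rw [hP] at hD
              exact absurd hD.2 (hC hD.1)
          · by_cases h3q : Odd q.1.parts.sup ∧ q.1.parts.sup < q.2 ∧ 3 ≤ q.1.parts.sup
            · -- C vs D
              have hD := evenD hq hdq h1q h2q h3q
              have hC := evenC hdp h1p h2p h3p
              rw [← hP] at hD
              exact absurd hD.2 (hC hD.1)
            · -- C-C
              have hsupp := supC h1p h2p h3p
              have hsupq := supC h1q h2q h3q
              have hsup : (Fm p).1.parts.sup = (Fm q).1.parts.sup := by rw [hP]
              have hL : p.1.parts.sup = q.1.parts.sup := by omega
              have hSp := (Fm_case3 p h1p h2p h3p).2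
              have hSq := (Fm_case3 q h1q h2q h3q).2
              rw [hSp, hSq] at hS
              rw [(Fm_case3 p h1p h2p h3p).1, (Fm_case3 q h1q h2q h3q).1, hL] at hP
              have he := (Multiset.cons_inj_right _).mp hP
              have hLmp : p.1.parts.sup ∈ p.1.parts := sup_mem_of_ne_zero (parts_ne_zero h1p)
              have hLmq : q.1.parts.sup ∈ q.1.parts := sup_mem_of_ne_zero (parts_ne_zero h1q)
              have hparts : p.1.parts = q.1.parts := by
                rw [← Multiset.cons_erase hLmp, ← Multiset.cons_erase hLmq, hL, he]
              exact sigma_nat_eq (Nat.Partition.ext hparts) hS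
      · -- C/D vs A
        have h2 := sndCD hp h1p h2p
        rw [hS, (Fm_case1 q h1q).2] at h2
        omega
  · by_cases h1q : (1:ℕ) ∈ q.1.parts
    · by_cases h2q : q.2 = 1
      · -- A vs B
        have hnot := memB h1q hdq h2q
        have hmem : (1:ℕ) ∈ (Fm p).1.parts := by
          rw [(Fm_case1 p h1p).1]; exact Multiset.mem_cons_self 1 _
        rw [hP] at hmem
        exact absurd hmem hnot
      · -- A vs C/D
        have h2 := sndCD hq h1q h2q
        rw [← hS, (Fm_case1 p h1p).2] at h2
        omega
    · -- A-A
      obtain ⟨hPp, hSp⟩ := Fm_case1 p h1p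
      obtain ⟨hPq, hSq⟩ := Fm_case1 q h1q
      rw [hPp, hPq] at hP
      have he := (Multiset.cons_inj_right 1).mp hP
      have hpm := pmoex_eq_one h1p
      have hqm := pmoex_eq_one h1q
      exact sigma_nat_eq (Nat.Partition.ext he) (by omega)

def Pstar (n : ℕ) : (n+1).Partition :=
  ⟨{n+1}, by intro i hi; rw [Multiset.mem_singleton] at hi; omega, by simp⟩

lemma Pstar_mem_TT (n : ℕ) : (⟨Pstar n, 1⟩ : Σ _ : (n+1).Partition, ℕ) ∈ TT (n+1) := by
  refine mem_TT.mpr ⟨?_, le_refl 1, pmoex_pos _⟩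
  intro k _
  show Multiset.count k {n+1} ≤ 1
  rw [Multiset.count_singleton]
  split <;> omega

lemma Pstar_not_image {n : ℕ} (hn : 4 ≤ n) {p : Σ _ : n.Partition, ℕ} (hp : p ∈ TT n) :
    Fm p ≠ (⟨Pstar n, 1⟩ : Σ _ : (n+1).Partition, ℕ) := by
  intro hfp
  have hP : (Fm p).1.parts = {n+1} := by rw [hfp]; rfl
  have hS : (Fm p).2 = 1 := by rw [hfp]
  by_cases h1 : (1:ℕ) ∈ p.1.parts
  · by_cases h2 : p.2 = 1
    · have hparts := (Fm_case2 p h1 h2).1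
      rw [hparts] at hP
      have h2mem : (2:ℕ) ∈ ({n+1} : Multiset ℕ) := by
        rw [← hP]; exact Multiset.mem_cons_self 2 _
      rw [Multiset.mem_singleton] at h2mem
      omega
    · have := sndCD hp h1 h2
      omega
  · have hparts := (Fm_case1 p h1).1
    rw [hparts] at hP
    have h1mem : (1:ℕ) ∈ ({n+1} : Multiset ℕ) := by
      rw [← hP]; exact Multiset.mem_cons_self 1 _
    rw [Multiset.mem_singleton] at h1mem
    omega

theorem stmt_8 : ∀ n : ℕ, 4 ≤ n → sigmaOdMoex n < sigmaOdMoex (n + 1) := by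
  intro n hn
  rw [← card_TT, ← card_TT]
  have himage : (TT n).image Fm ⊆ TT (n + 1) := by
    intro x hx
    obtain ⟨p, hp, rfl⟩ := Finset.mem_image.mp hx
    exact Fm_mapsTo hn hp
  have hmiss : (⟨Pstar n, 1⟩ : Σ _ : (n+1).Partition, ℕ) ∉ (TT n).image Fm := by
    intro h
    obtain ⟨p, hp, hfp⟩ := Finset.mem_image.mp h
    exact Pstar_not_image hn hp hfp
  calc (TT n).card = ((TT n).image Fm).card :=
        (Finset.card_image_of_injOn (fun p hp q hq h => Fm_injOn hp hq h)).symm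
    _ < (TT (n + 1)).card :=
        Finset.card_lt_card ((Finset.ssubset_iff_of_subset himage).mpr
          ⟨⟨Pstar n, 1⟩, Pstar_mem_TT n, hmiss⟩)


end
end

section
/- For all integers n ≥ 0 and j ≥ 1, the number of partitions λ ∈ P_od(n) with moex(λ) > 2j−1 equals the number of partitions μ of n − j² in which every odd part occurs at most once and every odd part is strictly greater than 2j−1 (this number being 0 when j² > n). -/
open Finset
open scoped Classical

noncomputable section

/-- the multiset of the first `j` odd numbers -/
def oddsBelow (j : ℕ) : Multiset ℕ := (Multiset.range j).map (fun i => 2 * i + 1)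

lemma oddsBelow_sum (j : ℕ) : (oddsBelow j).sum = j ^ 2 := by
  induction j with
  | zero => simp [oddsBelow]
  | succ j ih =>
    rw [oddsBelow, Multiset.range_succ, Multiset.map_cons, Multiset.sum_cons, ← oddsBelow, ih]
    ring

lemma oddsBelow_nodup (j : ℕ) : (oddsBelow j).Nodup :=
  (Multiset.nodup_range j).map (fun a b h => by omega)

lemma mem_oddsBelow {j k : ℕ} : k ∈ oddsBelow j ↔ Odd k ∧ k < 2 * j := by
  simp only [oddsBelow, Multiset.mem_map, Multiset.mem_range]
  constructor
  · rintro ⟨i, hi, rfl⟩; exact ⟨⟨i, by ring⟩, by omega⟩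
  · rintro ⟨⟨i, rfl⟩, h⟩; exact ⟨i, by omega, by omega⟩

lemma count_oddsBelow {j k : ℕ} :
    (oddsBelow j).count k = if Odd k ∧ k < 2 * j then 1 else 0 := by
  split_ifs with h
  · exact Multiset.count_eq_one_of_mem (oddsBelow_nodup j) (mem_oddsBelow.2 h)
  · exact Multiset.count_eq_zero_of_notMem (fun hk => h (mem_oddsBelow.1 hk))

lemma pmoex_gt {n : ℕ} (l : n.Partition) (t : ℕ) :
    t < pmoex l ↔ ∀ k ≤ t, Odd k → k ∈ l.parts := by
  constructor
  · intro h k hk hodd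
    by_contra hmem
    have : pmoex l ≤ k := Nat.sInf_le ⟨hodd, hmem⟩
    omega
  · intro h
    have hne : {k : ℕ | Odd k ∧ k ∉ l.parts}.Nonempty := by
      refine ⟨2 * n + 1, ⟨n, rfl⟩, fun hmem => ?_⟩
      have := Multiset.single_le_sum (fun x _ => Nat.zero_le x) _ hmem
      rw [l.parts_sum] at this; omega
    have hmem := Nat.sInf_mem hne
    by_contra hle
    exact hmem.2 (h (pmoex l) (by omega) hmem.1)

lemma oddsBelow_le_parts {n j : ℕ} (l : n.Partition) (h : 2 * j - 1 < pmoex l)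
    (hj : 1 ≤ j) : oddsBelow j ≤ l.parts := by
  rw [Multiset.le_iff_count]
  intro k
  rw [count_oddsBelow]
  split_ifs with hk
  · have := (pmoex_gt l (2 * j - 1)).1 h k (by omega) hk.1
    exact Multiset.one_le_count_iff_mem.2 this
  · exact Nat.zero_le _

theorem stmt_15 :
    ∀ n j : ℕ, 1 ≤ j →
      (Finset.univ.filter fun l : n.Partition =>
          OddDistinct l ∧ 2 * j - 1 < pmoex l).card =
        if j ^ 2 ≤ n then
          (Finset.univ.filter fun m : (n - j ^ 2).Partition =>
            OddDistinct m ∧ ∀ p ∈ m.parts, Odd p → 2 * j - 1 < p).card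
        else 0 := by
  intro n j hj
  split_ifs with hn
  · refine Finset.card_bij'
      (i := fun l hl => ⟨l.parts - oddsBelow j, ?_, ?_⟩)
      (j := fun m hm => ⟨m.parts + oddsBelow j, ?_, ?_⟩) ?_ ?_ ?_ ?_
    · -- parts_pos for forward
      intro i hi
      exact l.parts_pos (Multiset.mem_of_le (Multiset.sub_le_self _ _) hi)
    · -- parts_sum for forward
      simp only [Finset.mem_filter, Finset.mem_univ, true_and] at hl
      have hle := oddsBelow_le_parts l hl.2 hj
      obtain ⟨u, hu⟩ := Multiset.le_iff_exists_add.1 hle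
      have hsum : j ^ 2 + u.sum = n := by
        rw [← oddsBelow_sum j, ← Multiset.sum_add, ← hu, l.parts_sum]
      rw [hu, add_tsub_cancel_left]
      omega
    · -- parts_pos for backward
      intro i hi
      rw [Multiset.mem_add] at hi
      rcases hi with hi | hi
      · exact m.parts_pos hi
      · obtain ⟨t, ht⟩ := (mem_oddsBelow.1 hi).1; omega
    · -- parts_sum for backward
      rw [Multiset.sum_add, m.parts_sum, oddsBelow_sum]
      exact Nat.sub_add_cancel hn
    · -- forward lands in target
      intro l hl
      simp only [Finset.mem_filter, Finset.mem_univ, true_and] at hl ⊢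
      obtain ⟨hod, hmo⟩ := hl
      constructor
      · intro i hodd
        calc (l.parts - oddsBelow j).count i ≤ l.parts.count i :=
              Multiset.count_le_of_le _ (Multiset.sub_le_self _ _)
          _ ≤ 1 := hod i hodd
      · intro p hp hodd
        by_contra hle
        have hcount : (l.parts - oddsBelow j).count p = 0 := by
          rw [Multiset.count_sub, count_oddsBelow, if_pos ⟨hodd, by omega⟩]
          have := hod p hodd
          omega
        rw [← Multiset.count_pos] at hp
        omega
    · -- backward lands in source
      intro m hm
      simp only [Finset.mem_filter, Finset.mem_univ, true_and] at hm ⊢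
      obtain ⟨hod, hbig⟩ := hm
      constructor
      · intro i hodd
        rw [Multiset.count_add, count_oddsBelow]
        split_ifs with hi
        · have : m.parts.count i = 0 := by
            rw [Multiset.count_eq_zero]
            intro hmem
            have := hbig i hmem hodd
            omega
          omega
        · have := hod i hodd; omega
      · rw [pmoex_gt]
        intro k hk hodd
        simp only [Multiset.mem_add]
        exact Or.inr (mem_oddsBelow.2 ⟨hodd, by omega⟩)
    · -- left inverse
      intro l hl
      simp only [Finset.mem_filter, Finset.mem_univ, true_and] at hl
      have hle := oddsBelow_le_parts l hl.2 hj
      ext1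
      simp [tsub_add_cancel_of_le hle]
    · -- right inverse
      intro m hm
      ext1
      simp
  · rw [Finset.card_eq_zero, Finset.filter_eq_empty_iff]
    intro l _
    rintro ⟨hod, hmo⟩
    have hle := oddsBelow_le_parts l hmo hj
    obtain ⟨u, hu⟩ := Multiset.le_iff_exists_add.1 hle
    have : j ^ 2 + u.sum = n := by
      rw [← oddsBelow_sum j, ← Multiset.sum_add, ← hu, l.parts_sum]
    omega

end
end

section
/- For all integers n ≥ 0 and j ≥ 0, the number of partitions λ ∈ P_od(n) with meex(λ) > 2j equals p_od(n − j(j+1)) (interpreted as 0 when j(j+1) > n). -/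
open Finset
open scoped Classical

noncomputable section

/-- `p_od(n)`: number of partitions of `n` with distinct odd parts -/
def pod (n : ℕ) : ℕ :=
  (Finset.univ.filter fun l : n.Partition => OddDistinct l).card

/-- the multiset `{2, 4, …, 2j}` -/
def EE (j : ℕ) : Multiset ℕ := (Multiset.range j).map (fun i => 2*i+2)

lemma EE_sum (j : ℕ) : (EE j).sum = j * (j + 1) := by
  induction j with
  | zero => simp [EE]
  | succ j ih =>
    rw [EE, Multiset.range_succ, Multiset.map_cons, Multiset.sum_cons, ← EE, ih]
    ring

lemma mem_EE {k j : ℕ} : k ∈ EE j ↔ Even k ∧ 0 < k ∧ k ≤ 2 * j := by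
  simp only [EE, Multiset.mem_map, Multiset.mem_range]
  constructor
  · rintro ⟨i, hi, rfl⟩
    exact ⟨⟨i+1, by ring⟩, by omega, by omega⟩
  · rintro ⟨⟨m, hm⟩, hpos, hle⟩
    exact ⟨m - 1, by omega, by omega⟩

lemma EE_nodup (j : ℕ) : (EE j).Nodup :=
  (Multiset.nodup_range j).map (fun a b h => by omega)

lemma count_EE_odd {i j : ℕ} (h : Odd i) : (EE j).count i = 0 := by
  rw [Multiset.count_eq_zero]
  intro hm
  rcases (mem_EE.mp hm).1 with ⟨m, hm'⟩
  rcases h with ⟨c, hc⟩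
  omega

lemma meex_gt {n j : ℕ} (l : n.Partition) : 2 * j < pmeex l ↔ EE j ≤ l.parts := by
  rw [Multiset.le_iff_subset (EE_nodup j)]
  constructor
  · intro h k hk
    rcases mem_EE.mp hk with ⟨hev, hpos, hle⟩
    by_contra hnot
    have : pmeex l ≤ k := Nat.sInf_le ⟨hev, hpos, hnot⟩
    omega
  · intro h
    have hne : {k : ℕ | Even k ∧ 0 < k ∧ k ∉ l.parts}.Nonempty := by
      refine ⟨2 * n + 2, ⟨n+1, by ring⟩, by omega, fun hmem => ?_⟩
      have h1 : 2 * n + 2 ≤ l.parts.sum := Multiset.le_sum_of_mem hmem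
      rw [l.parts_sum] at h1
      omega
    rcases Nat.sInf_mem hne with ⟨hev, hpos, hnot⟩
    by_contra hle
    push_neg at hle
    exact hnot (h (mem_EE.mpr ⟨hev, hpos, hle⟩))

theorem stmt_17 :
    ∀ n j : ℕ,
      (Finset.univ.filter fun l : n.Partition =>
          OddDistinct l ∧ 2 * j < pmeex l).card =
        if j * (j + 1) ≤ n then pod (n - j * (j + 1)) else 0 := by
  intro n j
  by_cases h : j * (j + 1) ≤ n
  · rw [if_pos h, pod]
    set m := n - j * (j + 1) with hm
    refine Finset.card_bij'
      (fun l hl => ?_) (fun μ hμ => ?_) ?_ ?_ ?_ ?_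
    · -- forward map
      refine ⟨l.parts - EE j, ?_, ?_⟩
      · intro x hx
        exact l.parts_pos (Multiset.mem_of_le (Multiset.sub_le_self _ _) hx)
      · simp only [mem_filter] at hl
        have hle : EE j ≤ l.parts := (meex_gt l).mp hl.2.2
        have := congrArg Multiset.sum (tsub_add_cancel_of_le hle)
        rw [Multiset.sum_add, EE_sum, l.parts_sum] at this
        omega
    · -- backward map
      refine ⟨μ.parts + EE j, ?_, ?_⟩
      · intro x hx
        rcases Multiset.mem_add.mp hx with hx | hx
        · exact μ.parts_pos hx
        · exact (mem_EE.mp hx).2.1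
      · rw [Multiset.sum_add, EE_sum, μ.parts_sum]
        omega
    · -- forward lands in target
      intro l hl
      simp only [mem_filter, mem_univ, true_and] at hl ⊢
      intro i hi
      exact le_trans (Multiset.count_le_of_le i (Multiset.sub_le_self _ _)) (hl.1 i hi)
    · -- backward lands in source
      intro μ hμ
      simp only [mem_filter, mem_univ, true_and] at hμ ⊢
      constructor
      · intro i hi
        rw [Multiset.count_add, count_EE_odd hi, add_zero]
        exact hμ i hi
      · exact (meex_gt _).mpr (Multiset.le_add_left _ _)
    · -- left inverse
      intro l hl
      simp only [mem_filter, mem_univ, true_and] at hl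
      exact Nat.Partition.ext (tsub_add_cancel_of_le ((meex_gt l).mp hl.2))
    · -- right inverse
      intro μ hμ
      exact Nat.Partition.ext (add_tsub_cancel_right _ _)
  · rw [if_neg h, Finset.card_eq_zero, Finset.filter_eq_empty_iff]
    intro l _
    rintro ⟨-, hmeex⟩
    have hle : EE j ≤ l.parts := (meex_gt l).mp hmeex
    rcases Multiset.le_iff_exists_add.mp hle with ⟨u, hu⟩
    have := congrArg Multiset.sum hu
    rw [Multiset.sum_add, EE_sum, l.parts_sum] at this
    omega

end
end
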